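/- arXiv:math/0409268 — 3 statements merged into one kernel-verified Lean document; each statement's English description precedes it below -/
import Mathlib

section
/- Let γ be the standard Gaussian measure on ℝⁿ and let φ : ℝⁿ → ℝ be a C² function such that the gradient ∇φ and the Hessian Hess φ (in operator norm) have at most polynomial growth. Let ν be the pushforward of γ under the map T(x) = x + ∇φ(x). Then for every h ∈ ℝⁿ, (1/2) · ( ∫ ⟨y,h⟩² dν(y) − ‖h‖² − ( ∫ ⟨y,h⟩ dν(y) )² ) ≥ ∫ ⟨Hess φ(x) h, h⟩ dγ(x). (This is the finite-dimensional form of the paper's Theorem 1: the second-chaos kernel of the target measure dominates twice the mean Hessian of the transport potential, after subtracting the rank-one term built from the first-chaos kernel.) -/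
open MeasureTheory Real
open scoped RealInnerProductSpace ENNReal

/-- The standard Gaussian measure on `ℝⁿ` (identity covariance, mean zero). -/
noncomputable def stdGaussian (n : ℕ) : Measure (EuclideanSpace ℝ (Fin n)) :=
  (volume : Measure (EuclideanSpace ℝ (Fin n))).withDensity
    (fun x => ENNReal.ofReal ((2 * π) ^ (-(n : ℝ) / 2) * Real.exp (-‖x‖ ^ 2 / 2)))

/-- A function has at most polynomial growth. -/
def PolyGrowth {E F : Type*} [NormedAddCommGroup E] [NormedAddCommGroup F]
    (g : E → F) : Prop :=
  ∃ C > (0 : ℝ), ∃ k : ℕ, ∀ x, ‖g x‖ ≤ C * (1 + ‖x‖) ^ k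

namespace StdGaussianAux

variable {n : ℕ}

local notation "E" => EuclideanSpace ℝ (Fin n)

noncomputable def dens (n : ℕ) (x : EuclideanSpace ℝ (Fin n)) : ℝ :=
  (2 * π) ^ (-(n : ℝ) / 2) * Real.exp (-‖x‖ ^ 2 / 2)

lemma dens_pos (x : E) : 0 < dens n x := by
  unfold dens
  positivity

lemma dens_continuous : Continuous (dens n) := by
  unfold dens
  fun_prop

lemma stdGaussian_eq : stdGaussian n
    = (volume : Measure E).withDensity (fun x => ((dens n x).toNNReal : ℝ≥0∞)) := rfl

lemma integral_stdGaussian (g : E → ℝ) :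
    ∫ x, g x ∂(stdGaussian n) = ∫ x, dens n x * g x := by
  rw [stdGaussian_eq, integral_withDensity_eq_integral_smul
    (f := fun x => (dens n x).toNNReal) (dens_continuous.measurable.real_toNNReal) g]
  congr 1 with x
  simp [NNReal.smul_def, Real.coe_toNNReal _ (dens_pos x).le]

/-- integrability of exp-growth functions against the gaussian weight. -/
lemma integrable_weight (g : E → ℝ) (hg : Continuous g) {A B : ℝ} (hB : 0 ≤ B)
    (hbound : ∀ x, |g x| ≤ A * rexp (B * ‖x‖)) :
    Integrable (fun x => dens n x * g x) := by
  have hA : 0 ≤ A := by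
    have := (abs_nonneg (g 0)).trans (hbound 0)
    nlinarith [exp_pos (B * ‖(0:E)‖)]
  have hquarter : Integrable (fun v : E => rexp (-(1/4) * ‖v‖^2)) := by
    have h := (GaussianFourier.integrable_cexp_neg_mul_sq_norm_add
      (V := E) (b := (1/4 : ℂ)) (by norm_num) 0 0).norm
    refine h.congr ?_
    filter_upwards with v
    rw [Complex.norm_exp]
    norm_num [← Complex.ofReal_pow]
  have hc : (0:ℝ) < (2 * π) ^ (-(n : ℝ) / 2) := by positivity
  refine (hquarter.const_mul ((2 * π) ^ (-(n : ℝ) / 2) * (A * rexp (B^2)))).mono'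
    ((dens_continuous.mul hg).aestronglyMeasurable) ?_
  filter_upwards with x
  have h1 : dens n x * |g x| ≤ dens n x * (A * rexp (B * ‖x‖)) := by
    exact mul_le_mul_of_nonneg_left (hbound x) (dens_pos x).le
  have h2 : rexp (-‖x‖ ^ 2 / 2) * rexp (B * ‖x‖) ≤ rexp (B^2) * rexp (-(1/4) * ‖x‖^2) := by
    rw [← Real.exp_add, ← Real.exp_add]
    apply Real.exp_le_exp.2
    nlinarith [sq_nonneg (‖x‖/2 - B)]
  have : ‖dens n x * g x‖ = dens n x * |g x| := by
    rw [norm_mul, Real.norm_eq_abs, abs_of_pos (dens_pos x), Real.norm_eq_abs]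
  rw [this]
  calc dens n x * |g x| ≤ dens n x * (A * rexp (B * ‖x‖)) := h1
    _ ≤ (2 * π) ^ (-(n : ℝ) / 2) * (A * rexp (B^2)) * rexp (-(1/4) * ‖x‖^2) := by
        unfold dens
        nlinarith [exp_pos (-‖x‖^2/2), exp_pos (B * ‖x‖), exp_pos (B^2),
          exp_pos (-(1/4)*‖x‖^2), mul_le_mul_of_nonneg_left h2 (mul_nonneg hc.le hA)]

lemma integrable_stdGaussian (g : E → ℝ) (hg : Continuous g) {A B : ℝ} (hB : 0 ≤ B)
    (hbound : ∀ x, |g x| ≤ A * rexp (B * ‖x‖)) :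
    Integrable g (stdGaussian n) := by
  rw [stdGaussian, integrable_withDensity_iff]
  · refine ((integrable_weight g hg hB hbound).congr ?_)
    filter_upwards with x
    rw [show ((2 * π):ℝ) ^ (-(n:ℝ) / 2) * rexp (-‖x‖ ^ 2 / 2) = dens n x from rfl,
      ENNReal.toReal_ofReal (dens_pos (n := n) x).le]
    ring
  · exact (ENNReal.measurable_ofReal.comp dens_continuous.measurable)
  · filter_upwards with x using ENNReal.ofReal_lt_top

lemma integral_one_stdGaussian : ∫ _x : E, (1:ℝ) ∂(stdGaussian n) = 1 := by
  rw [integral_stdGaussian]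
  simp only [mul_one]
  unfold dens
  rw [MeasureTheory.integral_const_mul]
  have : ∀ x : E, rexp (-‖x‖ ^ 2 / 2) = rexp (-(1/2) * ‖x‖^2) := by
    intro x; ring_nf
  simp only [this]
  rw [GaussianFourier.integral_rexp_neg_mul_sq_norm (by norm_num : (0:ℝ) < 1/2),
    show π / (1/2) = 2*π by ring]
  have hd : (Module.finrank ℝ (EuclideanSpace ℝ (Fin n)) : ℝ) / 2 = (n:ℝ)/2 := by simp
  rw [hd, ← Real.rpow_add (by positivity : (0:ℝ) < 2*π),
    show -(n:ℝ)/2 + n/2 = 0 by ring, Real.rpow_zero]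

lemma translate_stdGaussian (f : E → ℝ) (v : E) :
    ∫ x, f (x + v) ∂(stdGaussian n)
      = ∫ y, rexp (⟪y, v⟫ - ‖v‖^2/2) * f y ∂(stdGaussian n) := by
  rw [integral_stdGaussian, integral_stdGaussian]
  have key := integral_add_right_eq_self (μ := (volume : Measure E)) (fun y : E => dens n (y - v) * f y) v
  simp only [add_sub_cancel_right] at key
  rw [key]
  congr 1 with y
  unfold dens
  rw [mul_comm (rexp _), mul_assoc, mul_assoc]
  congr 1
  rw [mul_comm (f _), ← mul_assoc, ← Real.exp_add]
  congr 2
  have : ‖y - v‖^2 = ‖y‖^2 - 2*⟪y,v⟫ + ‖v‖^2 := norm_sub_sq_real y v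
  rw [this]; ring

lemma ibp_stdGaussian (h : E) (ψ : E → ℝ) (ψ' : E → (E →L[ℝ] ℝ))
    (hd : ∀ x, HasFDerivAt ψ (ψ' x) x) (hψc : Continuous ψ)
    (hψ'c : Continuous fun x => ψ' x h)
    {A B : ℝ} (hA : 0 ≤ A) (hB : 0 ≤ B)
    (hψb : ∀ x, |ψ x| ≤ A * rexp (B * ‖x‖))
    (hψ'b : ∀ x, ‖ψ' x‖ ≤ A * rexp (B * ‖x‖)) :
    ∫ x, ⟪x, h⟫ * ψ x ∂(stdGaussian n) = ∫ x, ψ' x h ∂(stdGaussian n) := by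
  set γ := stdGaussian n with hγ
  -- the two expressions of the shifted integral
  have hFG : ∀ t : ℝ, (∫ x, ψ (x + t • h) ∂γ)
      = ∫ y, rexp (t * ⟪y, h⟫ - t^2 * (‖h‖^2/2)) * ψ y ∂γ := by
    intro t
    rw [translate_stdGaussian ψ (t • h)]
    congr 1 with y
    have : ⟪y, t • h⟫ - ‖t • h‖^2/2 = t * ⟪y, h⟫ - t^2 * (‖h‖^2/2) := by
      rw [real_inner_smul_right, norm_smul]
      simp [mul_pow, sq_abs]
      ring
    rw [this]
  -- derivative of the left expression at 0
  have hder1 : HasDerivAt (fun t : ℝ => ∫ x, ψ (x + t • h) ∂γ) (∫ x, ψ' x h ∂γ) 0 := by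
    have key := hasDerivAt_integral_of_dominated_loc_of_deriv_le
      (μ := γ) (x₀ := (0:ℝ)) (s := Metric.ball (0:ℝ) 1) (Metric.ball_mem_nhds _ (by norm_num))
      (F := fun t x => ψ (x + t • h)) (F' := fun t x => ψ' (x + t • h) h)
      (bound := fun x => (A * ‖h‖ * rexp (B * ‖h‖)) * rexp (B * ‖x‖))
      ?_ ?_ ?_ ?_ ?_ ?_
    · have e0 : (fun x : E => ψ' (x + (0:ℝ) • h) h) = fun x => ψ' x h := by
        funext x; simp
      rw [e0] at key
      exact key.2
    · filter_upwards with t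
      exact (hψc.comp (continuous_id.add continuous_const)).aestronglyMeasurable
    · refine integrable_stdGaussian _ (hψc.comp (continuous_id.add continuous_const)) (A := A) hB ?_
      intro x; simpa using hψb x
    · exact ((hψ'c.comp (continuous_id.add continuous_const)).aestronglyMeasurable :)
    · filter_upwards with x
      intro t ht
      simp only [Metric.mem_ball, dist_zero_right, Real.norm_eq_abs] at ht
      calc ‖ψ' (x + t • h) h‖ ≤ ‖ψ' (x + t • h)‖ * ‖h‖ := (ψ' (x + t • h)).le_opNorm h
        _ ≤ (A * rexp (B * ‖x + t • h‖)) * ‖h‖ := by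
            have := hψ'b (x + t • h)
            exact mul_le_mul_of_nonneg_right this (norm_nonneg h)
        _ ≤ (A * ‖h‖ * rexp (B * ‖h‖)) * rexp (B * ‖x‖) := by
            have hn : ‖x + t • h‖ ≤ ‖x‖ + ‖h‖ := by
              calc ‖x + t • h‖ ≤ ‖x‖ + ‖t • h‖ := norm_add_le _ _
                _ ≤ ‖x‖ + ‖h‖ := by
                  rw [norm_smul]
                  have : |t| * ‖h‖ ≤ 1 * ‖h‖ :=
                    mul_le_mul_of_nonneg_right ht.le (norm_nonneg h)
                  simpa using add_le_add_left (this.trans (by simp)) ‖x‖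
            have : rexp (B * ‖x + t • h‖) ≤ rexp (B * ‖h‖) * rexp (B * ‖x‖) := by
              rw [← Real.exp_add]
              exact Real.exp_le_exp.2 (by nlinarith)
            calc A * rexp (B * ‖x + t • h‖) * ‖h‖
                = (A * ‖h‖) * rexp (B * ‖x + t • h‖) := by ring
              _ ≤ (A * ‖h‖) * (rexp (B * ‖h‖) * rexp (B * ‖x‖)) :=
                  mul_le_mul_of_nonneg_left this (by positivity)
              _ = (A * ‖h‖ * rexp (B * ‖h‖)) * rexp (B * ‖x‖) := by ring
    · refine integrable_stdGaussian _ (by fun_prop) (A := A * ‖h‖ * rexp (B * ‖h‖)) hB ?_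
      intro x
      rw [abs_of_nonneg (by positivity)]
    · filter_upwards with x
      intro t _
      have ht : HasDerivAt (fun s : ℝ => x + s • h) h t := by
        simpa using ((hasDerivAt_id t).smul_const h).const_add x
      exact (hd (x + t • h)).comp_hasDerivAt t ht
  -- derivative of the right expression at 0
  have hder2 : HasDerivAt (fun t : ℝ => ∫ y, rexp (t * ⟪y, h⟫ - t^2 * (‖h‖^2/2)) * ψ y ∂γ)
      (∫ y, ⟪y, h⟫ * ψ y ∂γ) 0 := by
    have key := hasDerivAt_integral_of_dominated_loc_of_deriv_le
      (μ := γ) (x₀ := (0:ℝ)) (s := Metric.ball (0:ℝ) 1) (Metric.ball_mem_nhds _ (by norm_num))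
      (F := fun t y => rexp (t * ⟪y, h⟫ - t^2 * (‖h‖^2/2)) * ψ y)
      (F' := fun t y => (rexp (t * ⟪y, h⟫ - t^2 * (‖h‖^2/2))
        * (⟪y, h⟫ - 2*t*(‖h‖^2/2))) * ψ y)
      (bound := fun y => (A * (‖h‖ + ‖h‖^2)) * rexp ((B + ‖h‖ + 1) * ‖y‖))
      ?_ ?_ ?_ ?_ ?_ ?_
    · have e0 : (fun y : E => (rexp ((0:ℝ) * ⟪y, h⟫ - (0:ℝ)^2 * (‖h‖^2/2))
          * (⟪y, h⟫ - 2*(0:ℝ)*(‖h‖^2/2))) * ψ y) = fun y => ⟪y, h⟫ * ψ y := by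
        funext y; simp
      rw [e0] at key
      exact key.2
    · filter_upwards with t
      have : Continuous fun y : E => rexp (t * ⟪y, h⟫ - t^2 * (‖h‖^2/2)) * ψ y := by
        have hin : Continuous fun y : E => ⟪y, h⟫ := by
          exact continuous_id.inner continuous_const
        fun_prop
      exact this.aestronglyMeasurable
    · refine integrable_stdGaussian _ ?_ (A := A) hB ?_
      · have hin : Continuous fun y : E => ⟪y, h⟫ := continuous_id.inner continuous_const
        fun_prop
      · exact fun y => by simpa using hψb y
    · have hin : Continuous fun y : E => ⟪y, h⟫ := continuous_id.inner continuous_const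
      exact (by fun_prop : Continuous fun y : E => (rexp ((0:ℝ) * ⟪y, h⟫ - (0:ℝ)^2 * (‖h‖^2/2))
        * (⟪y, h⟫ - 2*(0:ℝ)*(‖h‖^2/2))) * ψ y).aestronglyMeasurable
    · filter_upwards with y
      intro t ht
      simp only [Metric.mem_ball, dist_zero_right, Real.norm_eq_abs] at ht
      have hay : |⟪y, h⟫| ≤ ‖y‖ * ‖h‖ := abs_real_inner_le_norm y h
      have h1 : rexp (t * ⟪y, h⟫ - t^2 * (‖h‖^2/2)) ≤ rexp (‖h‖ * ‖y‖) := by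
        apply Real.exp_le_exp.2
        have h1a : t * ⟪y, h⟫ ≤ |⟪y, h⟫| := by
          calc t * ⟪y, h⟫ ≤ |t * ⟪y, h⟫| := le_abs_self _
            _ = |t| * |⟪y, h⟫| := abs_mul _ _
            _ ≤ 1 * |⟪y, h⟫| := mul_le_mul_of_nonneg_right ht.le (abs_nonneg _)
            _ = |⟪y, h⟫| := one_mul _
        nlinarith [sq_nonneg t, sq_nonneg ‖h‖]
      have h2 : |⟪y, h⟫ - 2*t*(‖h‖^2/2)| ≤ (‖h‖ + ‖h‖^2) * rexp ‖y‖ := by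
        have h2a : |⟪y, h⟫ - 2*t*(‖h‖^2/2)| ≤ ‖y‖*‖h‖ + ‖h‖^2 := by
          calc |⟪y, h⟫ - 2*t*(‖h‖^2/2)| ≤ |⟪y, h⟫| + |2*t*(‖h‖^2/2)| := abs_sub _ _
            _ ≤ ‖y‖*‖h‖ + ‖h‖^2 := by
                have : |2*t*(‖h‖^2/2)| = |t| * ‖h‖^2 := by
                  rw [abs_mul, abs_mul]
                  simp [abs_of_nonneg (by positivity : (0:ℝ) ≤ ‖h‖^2/2)]
                  ring
                rw [this]
                have : |t| * ‖h‖^2 ≤ 1 * ‖h‖^2 :=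
                  mul_le_mul_of_nonneg_right ht.le (by positivity)
                nlinarith
        have hexp : 1 + ‖y‖ ≤ rexp ‖y‖ := by
          have := Real.add_one_le_exp ‖y‖
          linarith
        calc |⟪y, h⟫ - 2*t*(‖h‖^2/2)| ≤ ‖y‖*‖h‖ + ‖h‖^2 := h2a
          _ ≤ (‖h‖ + ‖h‖^2) * (1 + ‖y‖) := by nlinarith [norm_nonneg y, norm_nonneg h]
          _ ≤ (‖h‖ + ‖h‖^2) * rexp ‖y‖ := by
              apply mul_le_mul_of_nonneg_left hexp (by positivity)
      have h3 : |ψ y| ≤ A * rexp (B * ‖y‖) := hψb y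
      calc ‖(rexp (t * ⟪y, h⟫ - t^2 * (‖h‖^2/2)) * (⟪y, h⟫ - 2*t*(‖h‖^2/2))) * ψ y‖
          = rexp (t * ⟪y, h⟫ - t^2 * (‖h‖^2/2)) * |⟪y, h⟫ - 2*t*(‖h‖^2/2)| * |ψ y| := by
            rw [norm_mul, norm_mul, Real.norm_eq_abs, Real.norm_eq_abs, Real.norm_eq_abs,
              abs_of_pos (exp_pos _)]
        _ ≤ rexp (‖h‖ * ‖y‖) * ((‖h‖ + ‖h‖^2) * rexp ‖y‖) * (A * rexp (B * ‖y‖)) := by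
            have e1 := (exp_pos (t * ⟪y, h⟫ - t^2 * (‖h‖^2/2))).le
            have e2 := (exp_pos (‖h‖ * ‖y‖)).le
            have e3 := (exp_pos ‖y‖).le
            have e4 := (exp_pos (B * ‖y‖)).le
            have p1 : (0:ℝ) ≤ |⟪y, h⟫ - 2*t*(‖h‖^2/2)| := abs_nonneg _
            have p2 : (0:ℝ) ≤ (‖h‖ + ‖h‖^2) * rexp ‖y‖ := by positivity
            have p3 : (0:ℝ) ≤ |ψ y| := abs_nonneg _
            apply mul_le_mul _ h3 p3 (by positivity)
            exact mul_le_mul h1 h2 p1 e2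
        _ = (A * (‖h‖ + ‖h‖^2)) * rexp ((B + ‖h‖ + 1) * ‖y‖) := by
            rw [show (B + ‖h‖ + 1) * ‖y‖ = B*‖y‖ + (‖h‖*‖y‖ + ‖y‖) by ring,
              Real.exp_add, Real.exp_add]
            ring
    · refine integrable_stdGaussian _ (by fun_prop) (A := A * (‖h‖ + ‖h‖^2))
        (B := B + ‖h‖ + 1) (by positivity) ?_
      intro y
      rw [abs_of_nonneg (by positivity)]
    · filter_upwards with y
      intro t _
      have hu : HasDerivAt (fun s : ℝ => s * ⟪y, h⟫ - s^2 * (‖h‖^2/2))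
          (⟪y, h⟫ - 2*t*(‖h‖^2/2)) t := by
        have h1 : HasDerivAt (fun s : ℝ => s * ⟪y, h⟫) ⟪y, h⟫ t := by
          simpa using (hasDerivAt_id t).mul_const ⟪y, h⟫
        have h2 : HasDerivAt (fun s : ℝ => s^2 * (‖h‖^2/2)) (2*t*(‖h‖^2/2)) t := by
          have := (hasDerivAt_pow 2 t).mul_const (‖h‖^2/2)
          simpa using this
        exact h1.sub h2
      exact (hu.exp).mul_const (ψ y)
  -- identify the two derivatives
  have heq : (fun t : ℝ => ∫ x, ψ (x + t • h) ∂γ)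
      = fun t : ℝ => ∫ y, rexp (t * ⟪y, h⟫ - t^2 * (‖h‖^2/2)) * ψ y ∂γ := funext hFG
  rw [heq] at hder1
  exact hder2.unique hder1

lemma polyGrowth_exp {F : Type*} [NormedAddCommGroup F] {g : E → F}
    (hg : PolyGrowth g) : ∃ A : ℝ, 0 ≤ A ∧ ∃ B : ℝ, 0 ≤ B ∧
      ∀ x, ‖g x‖ ≤ A * rexp (B * ‖x‖) := by
  obtain ⟨C, hC, k, hk⟩ := hg
  refine ⟨C, hC.le, (k : ℝ), Nat.cast_nonneg k, fun x => ?_⟩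
  have h1 : (1 + ‖x‖) ^ k ≤ rexp ((k : ℝ) * ‖x‖) := by
    have hle : 1 + ‖x‖ ≤ rexp ‖x‖ := by
      have := Real.add_one_le_exp ‖x‖; linarith
    calc (1 + ‖x‖) ^ k ≤ (rexp ‖x‖) ^ k := pow_le_pow_left₀ (by positivity) hle k
      _ = rexp ((k : ℝ) * ‖x‖) := by rw [← Real.exp_nat_mul]
  calc ‖g x‖ ≤ C * (1 + ‖x‖) ^ k := hk x
    _ ≤ C * rexp ((k : ℝ) * ‖x‖) := mul_le_mul_of_nonneg_left h1 hC.le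
end StdGaussianAux

open StdGaussianAux

theorem stmt_0 (n : ℕ) (φ : EuclideanSpace ℝ (Fin n) → ℝ)
    (hφ : ContDiff ℝ 2 φ)
    (hgrad : PolyGrowth (fun x => gradient φ x))
    (hhess : PolyGrowth (fun x => fderiv ℝ (gradient φ) x))
    (ν : Measure (EuclideanSpace ℝ (Fin n)))
    (hν : ν = (stdGaussian n).map (fun x => x + gradient φ x)) :
    ∀ h : EuclideanSpace ℝ (Fin n),
      (1 / 2 : ℝ) * ((∫ y, ⟪y, h⟫ ^ 2 ∂ν) - ‖h‖ ^ 2 - (∫ y, ⟪y, h⟫ ∂ν) ^ 2)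
        ≥ ∫ x, ⟪fderiv ℝ (gradient φ) x h, h⟫ ∂(stdGaussian n) := by
  intro h
  set γ := stdGaussian n with hγdef
  -- smoothness of the gradient
  have hC1 : ContDiff ℝ 1 (gradient φ) := by
    have h1 : ContDiff ℝ 1 (fderiv ℝ φ) := hφ.fderiv_right (by norm_num)
    have e : gradient φ
        = fun x => (InnerProductSpace.toDual ℝ (EuclideanSpace ℝ (Fin n))).symm
          (fderiv ℝ φ x) := rfl
    rw [e]
    exact ((InnerProductSpace.toDual ℝ (EuclideanSpace ℝ (Fin n))).symm.contDiff).comp h1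
  have hgc : Continuous (gradient φ) := hC1.continuous
  have hder : ∀ x, HasFDerivAt (gradient φ) (fderiv ℝ (gradient φ) x) x :=
    fun x => (hC1.differentiable one_ne_zero x).hasFDerivAt
  have hfc : Continuous (fun x => fderiv ℝ (gradient φ) x) :=
    (contDiff_one_iff_fderiv.mp hC1).2
  -- growth bounds
  obtain ⟨Ag, hAg, Bg, hBg, hgb⟩ := polyGrowth_exp hgrad
  obtain ⟨Ah, hAh, Bh, hBh, hhb⟩ := polyGrowth_exp hhess
  -- the functions
  set ψ : EuclideanSpace ℝ (Fin n) → ℝ := fun x => ⟪gradient φ x, h⟫ with hψdef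
  set X : EuclideanSpace ℝ (Fin n) → ℝ := fun x => ⟪x, h⟫ with hXdef
  have hψeq : ψ = fun x => (innerSL ℝ h) (gradient φ x) := by
    funext x; exact real_inner_comm _ _
  have hXeq : X = fun x => (innerSL ℝ h) x := by
    funext x; exact real_inner_comm _ _
  have hXc : Continuous X := by rw [hXeq]; fun_prop
  have hψc : Continuous ψ := by rw [hψeq]; exact (innerSL ℝ h).continuous.comp hgc
  have ione : ∫ _x : EuclideanSpace ℝ (Fin n), (1:ℝ) ∂γ = 1 := integral_one_stdGaussian
  -- pointwise bounds
  have hXb : ∀ x, |X x| ≤ ‖h‖ * rexp (1 * ‖x‖) := by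
    intro x
    have h1 : |X x| ≤ ‖x‖ * ‖h‖ := abs_real_inner_le_norm x h
    have h2 : ‖x‖ ≤ rexp ‖x‖ := (Real.add_one_le_exp ‖x‖).trans' (by linarith)
    calc |X x| ≤ ‖x‖ * ‖h‖ := h1
      _ ≤ rexp ‖x‖ * ‖h‖ := mul_le_mul_of_nonneg_right h2 (norm_nonneg h)
      _ = ‖h‖ * rexp (1 * ‖x‖) := by rw [one_mul]; ring
  have hψb : ∀ x, |ψ x| ≤ (‖h‖ * Ag) * rexp (Bg * ‖x‖) := by
    intro x
    calc |ψ x| ≤ ‖gradient φ x‖ * ‖h‖ := abs_real_inner_le_norm _ _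
      _ ≤ (Ag * rexp (Bg * ‖x‖)) * ‖h‖ := mul_le_mul_of_nonneg_right (hgb x) (norm_nonneg h)
      _ = (‖h‖ * Ag) * rexp (Bg * ‖x‖) := by ring
  -- integrability
  have iX : Integrable X γ := integrable_stdGaussian X hXc (by norm_num) hXb
  have iψ : Integrable ψ γ := integrable_stdGaussian ψ hψc hBg hψb
  have i1 : Integrable (fun _ : EuclideanSpace ℝ (Fin n) => (1:ℝ)) γ :=
    integrable_stdGaussian _ continuous_const (A := 1) (B := 0) le_rfl (fun x => by simp)
  have iX2 : Integrable (fun x => X x ^ 2) γ := by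
    refine integrable_stdGaussian _ (by fun_prop) (A := ‖h‖^2) (B := 2) (by norm_num) ?_
    intro x
    have hb := hXb x
    rw [abs_of_nonneg (sq_nonneg _), sq]
    calc X x * X x ≤ |X x| * |X x| := by
          nlinarith [abs_nonneg (X x), le_abs_self (X x), neg_abs_le (X x)]
      _ ≤ (‖h‖ * rexp (1 * ‖x‖)) * (‖h‖ * rexp (1 * ‖x‖)) :=
          mul_le_mul hb hb (abs_nonneg _) (by positivity)
      _ = ‖h‖^2 * rexp (2 * ‖x‖) := by
          rw [show (2:ℝ) * ‖x‖ = 1 * ‖x‖ + 1 * ‖x‖ by ring, Real.exp_add]; ring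
  have iψ2 : Integrable (fun x => ψ x ^ 2) γ := by
    refine integrable_stdGaussian _ (by fun_prop) (A := (‖h‖ * Ag)^2) (B := 2*Bg)
      (by positivity) ?_
    intro x
    have hb := hψb x
    rw [abs_of_nonneg (sq_nonneg _), sq]
    calc ψ x * ψ x ≤ |ψ x| * |ψ x| := by
          nlinarith [abs_nonneg (ψ x), le_abs_self (ψ x), neg_abs_le (ψ x)]
      _ ≤ ((‖h‖ * Ag) * rexp (Bg * ‖x‖)) * ((‖h‖ * Ag) * rexp (Bg * ‖x‖)) :=
          mul_le_mul hb hb (abs_nonneg _) (by positivity)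
      _ = (‖h‖ * Ag)^2 * rexp (2*Bg * ‖x‖) := by
          rw [show (2*Bg:ℝ) * ‖x‖ = Bg * ‖x‖ + Bg * ‖x‖ by ring, Real.exp_add]; ring
  have iXψ : Integrable (fun x => X x * ψ x) γ := by
    refine integrable_stdGaussian _ (hXc.mul hψc) (A := ‖h‖ * (‖h‖ * Ag)) (B := 1 + Bg)
      (by positivity) ?_
    intro x
    rw [abs_mul]
    calc |X x| * |ψ x| ≤ (‖h‖ * rexp (1 * ‖x‖)) * ((‖h‖ * Ag) * rexp (Bg * ‖x‖)) :=
          mul_le_mul (hXb x) (hψb x) (abs_nonneg _) (by positivity)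
      _ = ‖h‖ * (‖h‖ * Ag) * rexp ((1 + Bg) * ‖x‖) := by
          rw [show ((1+Bg):ℝ) * ‖x‖ = 1 * ‖x‖ + Bg * ‖x‖ by ring, Real.exp_add]; ring
  -- IBP applications
  have ibp0 : ∫ x, X x ∂γ = 0 := by
    have key := ibp_stdGaussian (n := n) h (fun _ => (1:ℝ)) (fun _ => 0)
      (fun x => hasFDerivAt_const 1 x) continuous_const (by fun_prop)
      (A := 1) (B := 0) zero_le_one le_rfl
      (fun x => by simp) (fun x => by simp [Real.exp_nonneg])
    simp only [mul_one, ContinuousLinearMap.zero_apply, integral_zero] at key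
    exact key
  have ibpX : ∫ x, X x * X x ∂γ = ‖h‖ ^ 2 := by
    have hdX : ∀ x : EuclideanSpace ℝ (Fin n), HasFDerivAt X (innerSL ℝ h) x := by
      intro x; rw [hXeq]; exact (innerSL ℝ h).hasFDerivAt
    have key := ibp_stdGaussian (n := n) h X (fun _ => innerSL ℝ h) hdX hXc
      (by fun_prop) (A := ‖h‖) (B := 1) (norm_nonneg h) zero_le_one hXb
      (fun x => by
        rw [innerSL_apply_norm]
        nlinarith [Real.one_le_exp (by positivity : (0:ℝ) ≤ 1 * ‖x‖), norm_nonneg h])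
    rw [key]
    calc ∫ _x, (innerSL ℝ h) h ∂γ = ∫ _x : EuclideanSpace ℝ (Fin n), ⟪h, h⟫ * (1:ℝ) ∂γ := by
          congr 1 with x
          simp [innerSL_apply_apply]
      _ = ⟪h, h⟫ * ∫ _x : EuclideanSpace ℝ (Fin n), (1:ℝ) ∂γ :=
          MeasureTheory.integral_const_mul _ _
      _ = ‖h‖ ^ 2 := by rw [ione, real_inner_self_eq_norm_sq]; ring
  have ibpψ : ∫ x, X x * ψ x ∂γ = ∫ x, ⟪fderiv ℝ (gradient φ) x h, h⟫ ∂γ := by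
    have hdψ : ∀ x : EuclideanSpace ℝ (Fin n),
        HasFDerivAt ψ ((innerSL ℝ h).comp (fderiv ℝ (gradient φ) x)) x := by
      intro x
      rw [hψeq]
      exact ((innerSL ℝ h).hasFDerivAt).comp x (hder x)
    have hbnd : ∀ x : EuclideanSpace ℝ (Fin n), ‖(innerSL ℝ h).comp (fderiv ℝ (gradient φ) x)‖
        ≤ (‖h‖ * (Ag + Ah)) * rexp ((Bg + Bh) * ‖x‖) := by
      intro x
      have e1 : rexp (Bh * ‖x‖) ≤ rexp ((Bg + Bh) * ‖x‖) :=
        Real.exp_le_exp.2 (by nlinarith [norm_nonneg x])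
      have e2 : Ah * rexp (Bh * ‖x‖) ≤ (Ag + Ah) * rexp ((Bg + Bh) * ‖x‖) := by
        have := mul_le_mul_of_nonneg_left e1 hAh
        nlinarith [exp_pos ((Bg + Bh) * ‖x‖)]
      calc ‖(innerSL ℝ h).comp (fderiv ℝ (gradient φ) x)‖
          ≤ ‖innerSL ℝ h‖ * ‖fderiv ℝ (gradient φ) x‖ := ContinuousLinearMap.opNorm_comp_le _ _
        _ ≤ ‖h‖ * (Ah * rexp (Bh * ‖x‖)) := by
            rw [innerSL_apply_norm]
            exact mul_le_mul_of_nonneg_left (hhb x) (norm_nonneg h)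
        _ ≤ ‖h‖ * ((Ag + Ah) * rexp ((Bg + Bh) * ‖x‖)) :=
            mul_le_mul_of_nonneg_left e2 (norm_nonneg h)
        _ = (‖h‖ * (Ag + Ah)) * rexp ((Bg + Bh) * ‖x‖) := by ring
    have hψb' : ∀ x : EuclideanSpace ℝ (Fin n),
        |ψ x| ≤ (‖h‖ * (Ag + Ah)) * rexp ((Bg + Bh) * ‖x‖) := by
      intro x
      have e1 : rexp (Bg * ‖x‖) ≤ rexp ((Bg + Bh) * ‖x‖) :=
        Real.exp_le_exp.2 (by nlinarith [norm_nonneg x])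
      have e2 : (‖h‖ * Ag) * rexp (Bg * ‖x‖) ≤ (‖h‖ * (Ag + Ah)) * rexp ((Bg + Bh) * ‖x‖) := by
        have h1 := mul_le_mul_of_nonneg_left e1 (by positivity : (0:ℝ) ≤ ‖h‖ * Ag)
        nlinarith [exp_pos ((Bg + Bh) * ‖x‖), norm_nonneg h, hAh, hAg,
          mul_nonneg (mul_nonneg (norm_nonneg h) hAh) (exp_pos ((Bg + Bh) * ‖x‖)).le]
      exact (hψb x).trans e2
    have key := ibp_stdGaussian (n := n) h ψ
      (fun x => (innerSL ℝ h).comp (fderiv ℝ (gradient φ) x)) hdψ hψc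
      (by
        have hc : Continuous fun x : EuclideanSpace ℝ (Fin n) => fderiv ℝ (gradient φ) x h :=
          (ContinuousLinearMap.apply ℝ (EuclideanSpace ℝ (Fin n)) h).continuous.comp hfc
        exact (innerSL ℝ h).continuous.comp hc)
      (A := ‖h‖ * (Ag + Ah)) (B := Bg + Bh) (by positivity) (by positivity) hψb' hbnd
    rw [key]
    congr 1 with x
    simp only [ContinuousLinearMap.coe_comp', Function.comp_apply, innerSL_apply_apply]
    exact real_inner_comm _ _
  -- pushforward integrals
  have hT : Continuous (fun x : EuclideanSpace ℝ (Fin n) => x + gradient φ x) :=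
    continuous_id.add hgc
  have hν1 : ∫ y, ⟪y, h⟫ ∂ν = ∫ x, X x + ψ x ∂γ := by
    rw [hν, integral_map hT.measurable.aemeasurable (hXc.aestronglyMeasurable)]
    congr 1 with x
    exact inner_add_left _ _ _
  have hν2 : ∫ y, ⟪y, h⟫ ^ 2 ∂ν = ∫ x, (X x + ψ x) ^ 2 ∂γ := by
    rw [hν, integral_map (f := fun y => X y ^ 2) hT.measurable.aemeasurable ((hXc.pow 2).aestronglyMeasurable)]
    congr 1 with x
    exact congrArg (· ^ 2) (inner_add_left _ _ _)
  -- expand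
  have hexp2 : ∫ x, (X x + ψ x) ^ 2 ∂γ
      = (∫ x, X x * X x ∂γ) + 2 * (∫ x, X x * ψ x ∂γ) + ∫ x, ψ x ^ 2 ∂γ := by
    have isum : Integrable (fun x => 2 * (X x * ψ x) + ψ x ^ 2) γ :=
      (iXψ.const_mul 2).add iψ2
    have e : (fun x => (X x + ψ x) ^ 2)
        = fun x => X x * X x + (2 * (X x * ψ x) + ψ x ^ 2) := by
      funext x; ring
    rw [e, integral_add (by simpa [sq] using iX2) isum,
      integral_add (iXψ.const_mul 2) iψ2, MeasureTheory.integral_const_mul]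
    ring
  have hexp1 : ∫ x, X x + ψ x ∂γ = ∫ x, ψ x ∂γ := by
    rw [integral_add iX iψ, ibp0, zero_add]
  -- variance nonnegativity
  set m : ℝ := ∫ x, ψ x ∂γ with hm
  have hvar : m ^ 2 ≤ ∫ x, ψ x ^ 2 ∂γ := by
    have h0 : 0 ≤ ∫ x, (ψ x - m) ^ 2 ∂γ := integral_nonneg fun x => sq_nonneg _
    have ig : Integrable (fun x => -(2*m) * ψ x + m^2 * 1) γ :=
      (iψ.const_mul (-(2*m))).add (i1.const_mul (m^2))
    have hcalc : ∫ x, (ψ x - m) ^ 2 ∂γ = (∫ x, ψ x ^ 2 ∂γ) - m ^ 2 := by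
      have e : (fun x => (ψ x - m) ^ 2)
          = fun x => ψ x ^ 2 + (-(2*m) * ψ x + m^2 * 1) := by
        funext x; ring
      rw [e, integral_add iψ2 ig, integral_add (iψ.const_mul (-(2*m))) (i1.const_mul (m^2)),
        MeasureTheory.integral_const_mul, MeasureTheory.integral_const_mul, ione, ← hm]
      ring
    rw [hcalc] at h0
    linarith
  -- conclusion
  rw [hν1, hν2, hexp1, hexp2, ibpX, ← ibpψ]
  linarith [hvar]
end

section
/- Let γ be the standard Gaussian measure on ℝⁿ. Let L : ℝⁿ → ℝ be a C² function with L > 0 such that L, ∇L and Hess L have at most polynomial growth, and set E[L] = ∫ L dγ. Let φ : ℝⁿ → ℝ be a C² function whose gradient and Hessian have at most polynomial growth, and assume the pushforward of γ under T(x) = x + ∇φ(x) equals the probability measure (L/E[L])·γ. Then for every h ∈ ℝⁿ, (1/(2·E[L])) · ( ∫ ⟨Hess L(x) h, h⟩ dγ(x) − (1/E[L]) · ( ∫ ⟨∇L(x), h⟩ dγ(x) )² ) ≥ ∫ ⟨Hess φ(x) h, h⟩ dγ(x). (This is the paper's Theorem 1, inequality (1): (1/(2E[L]))·{E[∇²L]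 − E[∇L]⊗E[∇L]/E[L]} ≥ E[∇²φ] as quadratic forms, in the finite-dimensional Gaussian setting.) -/
set_option synthInstance.maxHeartbeats 1000000
set_option maxHeartbeats 1000000

open MeasureTheory Real
open scoped RealInnerProductSpace ENNReal

namespace StdGaussAux

variable {n : ℕ}

/-- The density of the standard Gaussian. -/
noncomputable def ρ (n : ℕ) (x : EuclideanSpace ℝ (Fin n)) : ℝ :=
  (2 * π) ^ (-(n : ℝ) / 2) * Real.exp (-‖x‖ ^ 2 / 2)

lemma ρ_pos (x : EuclideanSpace ℝ (Fin n)) : 0 < ρ n x := by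
  have : (0:ℝ) < (2 * π) ^ (-(n : ℝ) / 2) := rpow_pos_of_pos (by positivity) _
  exact mul_pos this (exp_pos _)

lemma ρ_cont : Continuous (ρ n) := by unfold ρ; fun_prop

lemma stdGaussian_eq : stdGaussian n
    = (volume : Measure (EuclideanSpace ℝ (Fin n))).withDensity
        (fun x => ENNReal.ofReal (ρ n x)) := rfl

lemma integral_stdGaussian (g : EuclideanSpace ℝ (Fin n) → ℝ) :
    ∫ x, g x ∂(stdGaussian n) = ∫ x, ρ n x * g x := by
  rw [stdGaussian_eq,
    show (fun x : EuclideanSpace ℝ (Fin n) => ENNReal.ofReal (ρ n x))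
      = (fun x => ((ρ n x).toNNReal : ℝ≥0∞)) from rfl,
    integral_withDensity_eq_integral_smul (ρ_cont.measurable.real_toNNReal) g]
  congr 1 with x
  simp [NNReal.smul_def, Real.coe_toNNReal _ (ρ_pos x).le]

lemma integrable_exp_neg_norm_sq (n : ℕ) {b : ℝ} (hb : 0 < b) :
    Integrable (fun v : EuclideanSpace ℝ (Fin n) => rexp (-b * ‖v‖^2)) := by
  have := (GaussianFourier.integrable_cexp_neg_mul_sq_norm_add (V := EuclideanSpace ℝ (Fin n))
    (b := (b:ℂ)) (by simpa using hb) 0 0).norm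
  convert this using 2 with v
  rw [Complex.norm_exp]
  norm_num
  left; norm_cast

lemma key_bound (m : ℕ) (c t : ℝ) (ht : 0 ≤ t) :
    (1 + t) ^ m * rexp (c * t) * rexp (-t^2/2)
      ≤ rexp (2 * (m + |c|)^2) * rexp (-(1/8) * t^2) := by
  set a := (m : ℝ) + |c| with ha
  have ha0 : 0 ≤ a := by positivity
  have h1 : (1 + t) ^ m ≤ rexp (m * t) := by
    calc (1 + t) ^ m ≤ (rexp t) ^ m := by
          apply pow_le_pow_left₀ (by linarith) (by linarith [add_one_le_exp t])
      _ = rexp (m * t) := by rw [← exp_nat_mul]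
  calc (1 + t) ^ m * rexp (c * t) * rexp (-t^2/2)
      ≤ rexp (m * t) * rexp (c * t) * rexp (-t^2/2) := by
        apply mul_le_mul_of_nonneg_right
          (mul_le_mul_of_nonneg_right h1 (exp_pos _).le) (exp_pos _).le
    _ = rexp (m * t + c * t + -t^2/2) := by rw [← exp_add, ← exp_add]
    _ ≤ rexp (2 * a^2 + -(1/8) * t^2) := by
        apply exp_le_exp.2
        have hct : c * t ≤ |c| * t := mul_le_mul_of_nonneg_right (le_abs_self c) ht
        nlinarith [sq_nonneg (t - 4 * a)]
    _ = rexp (2 * a^2) * rexp (-(1/8) * t^2) := by rw [exp_add]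

lemma integrable_poly_exp (c : ℝ) (m : ℕ) :
    Integrable (fun x : EuclideanSpace ℝ (Fin n) => (1 + ‖x‖) ^ m * rexp (c * ‖x‖))
      (stdGaussian n) := by
  rw [stdGaussian_eq,
    integrable_withDensity_iff (by exact ρ_cont.measurable.ennreal_ofReal)
      (Filter.Eventually.of_forall fun x => ENNReal.ofReal_lt_top)]
  have heq : (fun x : EuclideanSpace ℝ (Fin n) =>
        (1 + ‖x‖) ^ m * rexp (c * ‖x‖) * (ENNReal.ofReal (ρ n x)).toReal)
      = fun x => (1 + ‖x‖) ^ m * rexp (c * ‖x‖) * ρ n x := by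
    funext x; rw [ENNReal.toReal_ofReal (ρ_pos x).le]
  rw [heq]
  have cont1 : Continuous fun x : EuclideanSpace ℝ (Fin n) => (1 + ‖x‖) ^ m * rexp (c * ‖x‖) := by
    fun_prop
  have hmeas := ((cont1.mul ρ_cont).aestronglyMeasurable :
    AEStronglyMeasurable _ (volume : Measure (EuclideanSpace ℝ (Fin n))))
  set K : ℝ := (2 * π) ^ (-(n : ℝ) / 2) * rexp (2 * ((m : ℝ) + |c|)^2) with hK
  apply Integrable.mono
    ((integrable_exp_neg_norm_sq n (b := 1/8) (by norm_num)).const_mul K) hmeas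
  filter_upwards with x
  have h0 : (0:ℝ) < (2 * π) ^ (-(n : ℝ) / 2) := rpow_pos_of_pos (by positivity) _
  have hb := key_bound m c ‖x‖ (norm_nonneg x)
  rw [Real.norm_eq_abs, Real.norm_eq_abs, Pi.mul_apply]
  rw [abs_of_nonneg (mul_nonneg (by positivity) (ρ_pos x).le), abs_of_nonneg (by positivity)]
  have : (1 + ‖x‖) ^ m * rexp (c * ‖x‖) * ρ n x
      = (2 * π) ^ (-(n : ℝ) / 2) * ((1 + ‖x‖) ^ m * rexp (c * ‖x‖) * rexp (-‖x‖^2/2)) := by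
    unfold ρ; ring
  rw [this, hK]
  calc (2 * π) ^ (-(n : ℝ) / 2) * ((1 + ‖x‖) ^ m * rexp (c * ‖x‖) * rexp (-‖x‖^2/2))
      ≤ (2 * π) ^ (-(n : ℝ) / 2) * (rexp (2 * ((m:ℝ) + |c|)^2) * rexp (-(1/8) * ‖x‖^2)) :=
        mul_le_mul_of_nonneg_left hb h0.le
    _ = (2 * π) ^ (-(n : ℝ) / 2) * rexp (2 * ((m:ℝ) + |c|)^2) * rexp (-(1/8) * ‖x‖^2) := by ring

lemma integrable_of_le_poly_exp {u : EuclideanSpace ℝ (Fin n) → ℝ}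
    (hu : AEStronglyMeasurable u (stdGaussian n)) (C : ℝ) (c : ℝ) (m : ℕ)
    (hb : ∀ x, ‖u x‖ ≤ C * ((1 + ‖x‖) ^ m * rexp (c * ‖x‖))) :
    Integrable u (stdGaussian n) := by
  apply Integrable.mono ((integrable_poly_exp (n := n) c m).const_mul C) hu
  filter_upwards with x
  refine (hb x).trans ?_
  rw [Real.norm_eq_abs]
  exact le_abs_self _

lemma integrable_of_polyGrowth {u : EuclideanSpace ℝ (Fin n) → ℝ}
    (hu : AEStronglyMeasurable u (stdGaussian n)) (hg : PolyGrowth u) :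
    Integrable u (stdGaussian n) := by
  obtain ⟨C, hC, k, hk⟩ := hg
  apply integrable_of_le_poly_exp hu C 0 k
  intro x
  simpa using hk x

lemma integral_rho (n : ℕ) : ∫ x : EuclideanSpace ℝ (Fin n), ρ n x = 1 := by
  have h2π : (0:ℝ) < 2 * π := by positivity
  have : ∀ x : EuclideanSpace ℝ (Fin n), ρ n x
      = (2 * π) ^ (-(n : ℝ) / 2) * rexp (-(1/2) * ‖x‖^2) := by
    intro x; unfold ρ; ring_nf
  rw [show (fun x : EuclideanSpace ℝ (Fin n) => ρ n x) = _ from funext this]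
  rw [integral_const_mul, GaussianFourier.integral_rexp_neg_mul_sq_norm (by norm_num : (0:ℝ) < 1/2)]
  rw [show π / (1/2) = 2 * π by ring, finrank_euclideanSpace_fin]
  rw [← rpow_add h2π, show -(n:ℝ)/2 + (n:ℝ)/2 = 0 by ring, rpow_zero]

lemma integrable_rho (n : ℕ) : Integrable (fun x : EuclideanSpace ℝ (Fin n) => ρ n x) := by
  have : ∀ x : EuclideanSpace ℝ (Fin n), ρ n x
      = (2 * π) ^ (-(n : ℝ) / 2) * rexp (-(1/2) * ‖x‖^2) := by
    intro x; unfold ρ; ring_nf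
  rw [show (fun x : EuclideanSpace ℝ (Fin n) => ρ n x) = _ from funext this]
  exact (integrable_exp_neg_norm_sq n (by norm_num)).const_mul _

instance : IsProbabilityMeasure (stdGaussian n) := by
  rw [stdGaussian_eq]
  constructor
  rw [withDensity_apply _ MeasurableSet.univ, setLIntegral_univ,
    ← ofReal_integral_eq_lintegral_ofReal (integrable_rho n)
      (Filter.Eventually.of_forall fun x => (ρ_pos x).le), integral_rho]
  norm_num

lemma inner_gradient (f : EuclideanSpace ℝ (Fin n) → ℝ) (x y : EuclideanSpace ℝ (Fin n)) :
    ⟪gradient f x, y⟫ = fderiv ℝ f x y := by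
  simp [gradient, InnerProductSpace.toDual_symm_apply]

/-- translation identity for the Gaussian density -/
lemma rho_sub (y a : EuclideanSpace ℝ (Fin n)) :
    ρ n (y - a) = ρ n y * rexp (⟪y, a⟫ - ‖a‖^2/2) := by
  unfold ρ
  rw [mul_assoc, ← exp_add, @norm_sub_sq_real]
  congr 2
  ring

/-- Equality of the two representations of the shifted integral. -/
lemma shift_eq (g : EuclideanSpace ℝ (Fin n) → ℝ) (h : EuclideanSpace ℝ (Fin n)) (t : ℝ) :
    ∫ x, g (x + t • h) ∂(stdGaussian n)
      = ∫ x, g x * rexp (t * ⟪x, h⟫ - t^2 * (‖h‖^2/2)) ∂(stdGaussian n) := by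
  rw [integral_stdGaussian, integral_stdGaussian]
  have key := integral_add_right_eq_self (μ := (volume : Measure (EuclideanSpace ℝ (Fin n))))
    (fun y => ρ n (y - t • h) * g y) (t • h)
  simp only [add_sub_cancel_right] at key
  rw [key]
  congr 1 with y
  rw [rho_sub]
  rw [real_inner_smul_right, norm_smul]
  simp only [Real.norm_eq_abs, mul_pow, sq_abs]
  ring_nf

lemma hasDerivAt_F1 (g : EuclideanSpace ℝ (Fin n) → ℝ) (hg : ContDiff ℝ 1 g)
    (hgG : PolyGrowth g) (hg'G : PolyGrowth (fun x => fderiv ℝ g x))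
    (h : EuclideanSpace ℝ (Fin n)) :
    HasDerivAt (fun t : ℝ => ∫ x, g (x + t • h) ∂(stdGaussian n))
      (∫ x, fderiv ℝ g x h ∂(stdGaussian n)) 0 := by
  obtain ⟨C, hC, k, hk⟩ := hg'G
  have hgc : Continuous g := hg.continuous
  have hfc : Continuous (fun x => fderiv ℝ g x) := hg.continuous_fderiv (by norm_num)
  set bound : EuclideanSpace ℝ (Fin n) → ℝ :=
    fun x => (C * ‖h‖ * (1 + ‖h‖)^k) * ((1 + ‖x‖)^k * rexp (0 * ‖x‖)) with hbound
  have hbint : Integrable bound (stdGaussian n) := (integrable_poly_exp 0 k).const_mul _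
  have key := hasDerivAt_integral_of_dominated_loc_of_deriv_le (μ := stdGaussian n)
    (F := fun t x => g (x + t • h)) (F' := fun t x => fderiv ℝ g (x + t • h) h)
    (x₀ := (0:ℝ)) (bound := bound) (s := Metric.ball 0 1) (Metric.ball_mem_nhds 0 one_pos)
    (Filter.Eventually.of_forall fun t =>
      (hgc.comp (by continuity)).aestronglyMeasurable)
    ?_ ?_ ?_ hbint ?_
  · have : (fun x => fderiv ℝ g (x + (0:ℝ) • h) h) = fun x => fderiv ℝ g x h := by
      funext x; simp
    rw [this] at key
    simpa using key.2
  · -- integrable (F 0)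
    apply integrable_of_polyGrowth _ ?_
    · apply Continuous.aestronglyMeasurable; continuity
    · obtain ⟨C', hC', k', hk'⟩ := hgG
      exact ⟨C', hC', k', fun x => by simpa using hk' x⟩
  · -- AESM of F' 0
    apply Continuous.aestronglyMeasurable
    have : Continuous fun x : EuclideanSpace ℝ (Fin n) => fderiv ℝ g (x + (0:ℝ) • h) := by
      apply hfc.comp; continuity
    exact this.clm_apply continuous_const
  · -- bound
    filter_upwards with x
    intro t ht
    simp only [Metric.mem_ball, dist_zero_right, Real.norm_eq_abs] at ht
    have h1 : ‖fderiv ℝ g (x + t • h) h‖ ≤ ‖fderiv ℝ g (x + t • h)‖ * ‖h‖ :=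
      ContinuousLinearMap.le_opNorm _ _
    have h2 : ‖fderiv ℝ g (x + t • h)‖ ≤ C * (1 + ‖x + t • h‖)^k := hk _
    have h3 : 1 + ‖x + t • h‖ ≤ (1 + ‖h‖) * (1 + ‖x‖) := by
      have : ‖x + t • h‖ ≤ ‖x‖ + |t| * ‖h‖ := by
        refine (norm_add_le _ _).trans ?_
        rw [norm_smul, Real.norm_eq_abs]
      nlinarith [norm_nonneg x, norm_nonneg h, abs_nonneg t]
    have h4 : (1 + ‖x + t • h‖)^k ≤ ((1 + ‖h‖) * (1 + ‖x‖))^k :=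
      pow_le_pow_left₀ (by positivity) h3 k
    rw [hbound]
    simp only [zero_mul, exp_zero, mul_one]
    calc ‖fderiv ℝ g (x + t • h) h‖ ≤ (C * (1 + ‖x + t • h‖)^k) * ‖h‖ :=
          h1.trans (mul_le_mul_of_nonneg_right h2 (norm_nonneg _))
      _ ≤ (C * ((1 + ‖h‖) * (1 + ‖x‖))^k) * ‖h‖ := by
          apply mul_le_mul_of_nonneg_right _ (norm_nonneg _)
          exact mul_le_mul_of_nonneg_left h4 hC.le
      _ = C * ‖h‖ * (1 + ‖h‖)^k * (1 + ‖x‖)^k := by rw [mul_pow]; ring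
  · -- HasDerivAt
    filter_upwards with x
    intro t ht
    have hline : HasDerivAt (fun s : ℝ => x + s • h) h t := by
      simpa using ((hasDerivAt_id t).smul_const h).const_add x
    exact ((hg.differentiable (by norm_num) (x + t • h)).hasFDerivAt).comp_hasDerivAt t hline

lemma hasDerivAt_F2 (g : EuclideanSpace ℝ (Fin n) → ℝ) (hg : ContDiff ℝ 1 g)
    (hgG : PolyGrowth g) (h : EuclideanSpace ℝ (Fin n)) :
    HasDerivAt (fun t : ℝ => ∫ x, g x * rexp (t * ⟪x, h⟫ - t^2 * (‖h‖^2/2)) ∂(stdGaussian n))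
      (∫ x, ⟪x, h⟫ * g x ∂(stdGaussian n)) 0 := by
  obtain ⟨C, hC, k, hk⟩ := hgG
  have hgc : Continuous g := hg.continuous
  have hinner : Continuous fun x : EuclideanSpace ℝ (Fin n) => (⟪x, h⟫ : ℝ) :=
    Continuous.inner continuous_id continuous_const
  set bound : EuclideanSpace ℝ (Fin n) → ℝ :=
    fun x => (C * (1 + ‖h‖ + ‖h‖^2)) * ((1 + ‖x‖)^(k+1) * rexp (‖h‖ * ‖x‖)) with hbound
  have hbint : Integrable bound (stdGaussian n) := (integrable_poly_exp ‖h‖ (k+1)).const_mul _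
  have key := hasDerivAt_integral_of_dominated_loc_of_deriv_le (μ := stdGaussian n)
    (F := fun t x => g x * rexp (t * ⟪x, h⟫ - t^2 * (‖h‖^2/2)))
    (F' := fun t x => g x * ((⟪x, h⟫ - t * ‖h‖^2) * rexp (t * ⟪x, h⟫ - t^2 * (‖h‖^2/2))))
    (x₀ := (0:ℝ)) (bound := bound) (s := Metric.ball 0 1) (Metric.ball_mem_nhds 0 one_pos)
    (Filter.Eventually.of_forall fun t => Continuous.aestronglyMeasurable
      (hgc.mul (Real.continuous_exp.comp
        ((continuous_const.mul hinner).sub continuous_const))))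
    ?_ ?_ ?_ hbint ?_
  · have heq : (fun x : EuclideanSpace ℝ (Fin n) =>
        g x * ((⟪x, h⟫ - 0 * ‖h‖^2) * rexp (0 * ⟪x, h⟫ - 0^2 * (‖h‖^2/2))))
        = fun x => ⟪x, h⟫ * g x := by
      funext x; simp; ring
    rw [heq] at key
    exact key.2
  · -- integrable F 0
    apply (integrable_of_polyGrowth hgc.aestronglyMeasurable ⟨C, hC, k, hk⟩).congr
    filter_upwards with x
    simp
  · -- AESM F' 0
    apply Continuous.aestronglyMeasurable
    exact hgc.mul (((hinner.sub continuous_const).mul (Real.continuous_exp.comp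
      ((continuous_const.mul hinner).sub continuous_const))))
  · -- bound
    filter_upwards with x
    intro t ht
    simp only [Metric.mem_ball, dist_zero_right, Real.norm_eq_abs] at ht
    have ha : |⟪x, h⟫| ≤ ‖x‖ * ‖h‖ := abs_real_inner_le_norm x h
    have hgx : |g x| ≤ C * (1 + ‖x‖)^k := by
      have := hk x; rwa [Real.norm_eq_abs] at this
    have hexp : rexp (t * ⟪x, h⟫ - t^2 * (‖h‖^2/2)) ≤ rexp (‖h‖ * ‖x‖) := by
      apply exp_le_exp.2
      have h1 : t * ⟪x, h⟫ ≤ |t| * |⟪x, h⟫| := by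
        calc t * ⟪x, h⟫ ≤ |t * ⟪x, h⟫| := le_abs_self _
          _ = |t| * |⟪x, h⟫| := abs_mul _ _
      nlinarith [sq_nonneg t, norm_nonneg h, norm_nonneg x, abs_nonneg t,
        abs_nonneg (⟪x, h⟫ : ℝ), mul_le_mul_of_nonneg_left ha (abs_nonneg t)]
    have hfac : |⟪x, h⟫ - t * ‖h‖^2| ≤ (‖h‖ + ‖h‖^2) * (1 + ‖x‖) := by
      refine (abs_sub _ _).trans ?_
      have : |t * ‖h‖^2| ≤ ‖h‖^2 := by
        rw [abs_mul, abs_of_nonneg (sq_nonneg ‖h‖)]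
        nlinarith [sq_nonneg ‖h‖]
      nlinarith [norm_nonneg x, norm_nonneg h]
    rw [Real.norm_eq_abs, abs_mul, abs_mul, abs_of_nonneg (exp_pos _).le, hbound]
    calc |g x| * (|⟪x, h⟫ - t * ‖h‖^2| * rexp (t * ⟪x, h⟫ - t^2 * (‖h‖^2/2)))
        ≤ (C * (1 + ‖x‖)^k) * (((‖h‖ + ‖h‖^2) * (1 + ‖x‖)) * rexp (‖h‖ * ‖x‖)) := by
          apply mul_le_mul hgx _ (by positivity) (by positivity)
          exact mul_le_mul hfac hexp (exp_pos _).le (by positivity)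
      _ = (C * (‖h‖ + ‖h‖^2)) * ((1 + ‖x‖)^(k+1) * rexp (‖h‖ * ‖x‖)) := by
          rw [pow_succ]; ring
      _ ≤ (C * (1 + ‖h‖ + ‖h‖^2)) * ((1 + ‖x‖)^(k+1) * rexp (‖h‖ * ‖x‖)) := by
          apply mul_le_mul_of_nonneg_right _ (by positivity)
          nlinarith
  · -- HasDerivAt
    filter_upwards with x
    intro t ht
    have hu : HasDerivAt (fun s : ℝ => s * ⟪x, h⟫ - s^2 * (‖h‖^2/2))
        (⟪x, h⟫ - t * ‖h‖^2) t := by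
      have h1 : HasDerivAt (fun s : ℝ => s * ⟪x, h⟫) ⟪x, h⟫ t := by
        simpa using (hasDerivAt_id t).mul_const (⟪x, h⟫ : ℝ)
      have h2 : HasDerivAt (fun s : ℝ => s^2 * (‖h‖^2/2)) (2 * t * (‖h‖^2/2)) t := by
        simpa using (hasDerivAt_pow 2 t).mul_const (‖h‖^2/2)
      have := h1.sub h2
      exact this.congr_deriv (by ring)
    have := (hu.exp).const_mul (g x)
    exact this.congr_deriv (by ring)

/-- Gaussian integration by parts. -/
lemma gauss_ibp (g : EuclideanSpace ℝ (Fin n) → ℝ) (hg : ContDiff ℝ 1 g)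
    (hgG : PolyGrowth g) (hg'G : PolyGrowth (fun x => fderiv ℝ g x))
    (h : EuclideanSpace ℝ (Fin n)) :
    ∫ x, ⟪x, h⟫ * g x ∂(stdGaussian n) = ∫ x, fderiv ℝ g x h ∂(stdGaussian n) := by
  have h1 := hasDerivAt_F1 g hg hgG hg'G h
  have h2 := hasDerivAt_F2 g hg hgG h
  have hfun : (fun t : ℝ => ∫ x, g (x + t • h) ∂(stdGaussian n))
      = (fun t : ℝ => ∫ x, g x * rexp (t * ⟪x, h⟫ - t^2 * (‖h‖^2/2)) ∂(stdGaussian n)) :=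
    funext fun t => shift_eq g h t
  rw [hfun] at h1
  exact h2.unique h1

end StdGaussAux

namespace StdGaussAux

variable {n : ℕ}

local notation "Ee" => EuclideanSpace ℝ (Fin n)

lemma norm_gradient (f : Ee → ℝ) (x : Ee) : ‖gradient f x‖ = ‖fderiv ℝ f x‖ := by
  rw [gradient]
  exact LinearIsometryEquiv.norm_map _ _

lemma contdiff_gradient {f : Ee → ℝ} (hf : ContDiff ℝ 2 f) : ContDiff ℝ 1 (gradient f) := by
  have : gradient f = fun x => (InnerProductSpace.toDual ℝ _).symm (fderiv ℝ f x) := rfl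
  rw [this]
  exact (InnerProductSpace.toDual ℝ _).symm.contDiff.comp (hf.fderiv_right (by norm_num))

lemma pg_inner (h : Ee) : PolyGrowth (fun x : Ee => (⟪x, h⟫ : ℝ)) := by
  refine ⟨1 + ‖h‖, by positivity, 1, fun x => ?_⟩
  rw [Real.norm_eq_abs]
  calc |(⟪x, h⟫ : ℝ)| ≤ ‖x‖ * ‖h‖ := abs_real_inner_le_norm x h
    _ ≤ (1 + ‖h‖) * (1 + ‖x‖) ^ 1 := by
        nlinarith [norm_nonneg x, norm_nonneg h]

lemma pg_mul {u v : Ee → ℝ} (hu : PolyGrowth u) (hv : PolyGrowth v) :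
    PolyGrowth (fun x => u x * v x) := by
  obtain ⟨C, hC, k, hk⟩ := hu
  obtain ⟨D, hD, l, hl⟩ := hv
  refine ⟨C * D, by positivity, k + l, fun x => ?_⟩
  rw [Real.norm_eq_abs, abs_mul, pow_add]
  calc |u x| * |v x| ≤ (C * (1 + ‖x‖)^k) * (D * (1 + ‖x‖)^l) := by
        apply mul_le_mul _ _ (abs_nonneg _) (by positivity)
        · rw [← Real.norm_eq_abs]; exact hk x
        · rw [← Real.norm_eq_abs]; exact hl x
    _ = C * D * ((1 + ‖x‖)^k * (1 + ‖x‖)^l) := by ring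

lemma pg_inner_grad {f : Ee → ℝ} (hf : PolyGrowth (fun x => gradient f x)) (h : Ee) :
    PolyGrowth (fun x : Ee => (⟪gradient f x, h⟫ : ℝ)) := by
  obtain ⟨C, hC, k, hk⟩ := hf
  refine ⟨C * (1 + ‖h‖), by positivity, k, fun x => ?_⟩
  rw [Real.norm_eq_abs]
  calc |(⟪gradient f x, h⟫ : ℝ)| ≤ ‖gradient f x‖ * ‖h‖ := abs_real_inner_le_norm _ _
    _ ≤ (C * (1 + ‖x‖)^k) * ‖h‖ := mul_le_mul_of_nonneg_right (hk x) (norm_nonneg h)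
    _ ≤ C * (1 + ‖h‖) * (1 + ‖x‖)^k := by
        have : (0:ℝ) ≤ C * (1 + ‖x‖)^k := by positivity
        nlinarith [norm_nonneg h]

lemma integrable_cpg {u : Ee → ℝ} (hc : Continuous u) (hpg : PolyGrowth u) :
    Integrable u (stdGaussian n) :=
  integrable_of_polyGrowth hc.aestronglyMeasurable hpg

lemma cont_inner (h : Ee) : Continuous (fun x : Ee => (⟪x, h⟫ : ℝ)) :=
  Continuous.inner continuous_id continuous_const

/-- IBP with g = 1 -/
lemma ibp_one (h : Ee) : ∫ x, (⟪x, h⟫ : ℝ) ∂(stdGaussian n) = 0 := by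
  have := gauss_ibp (n := n) (fun _ => (1:ℝ)) contDiff_const
    ⟨1, one_pos, 0, fun x => by simp⟩
    ⟨1, one_pos, 0, fun x => by simp⟩ h
  simpa using this

/-- IBP with g = ⟪·,h⟫ -/
lemma ibp_linear (h : Ee) :
    ∫ x, (⟪x, h⟫ : ℝ) * ⟪x, h⟫ ∂(stdGaussian n) = ‖h‖^2 := by
  have heq : (fun x : Ee => (⟪x, h⟫ : ℝ)) = ⇑(innerSL ℝ h) := by
    funext x; simp only [innerSL_apply_apply]; exact real_inner_comm h x
  have hfd : ∀ x : Ee, fderiv ℝ (fun x : Ee => (⟪x, h⟫ : ℝ)) x = innerSL ℝ h := by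
    intro x; rw [heq]; exact ContinuousLinearMap.fderiv _
  have := gauss_ibp (n := n) (fun x => (⟪x, h⟫ : ℝ))
    (ContDiff.inner ℝ contDiff_id contDiff_const)
    (pg_inner h)
    ⟨1 + ‖h‖, by positivity, 0, fun x => by
      beta_reduce
      rw [hfd x]
      simp only [pow_zero, mul_one]
      calc ‖innerSL ℝ h‖ = ‖h‖ := by rw [innerSL_apply_norm]
        _ ≤ 1 + ‖h‖ := by linarith [norm_nonneg h]⟩ h
  rw [this]
  have : ∀ x : Ee, fderiv ℝ (fun x : Ee => (⟪x, h⟫ : ℝ)) x h = ‖h‖^2 := by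
    intro x
    rw [hfd x]
    simp only [innerSL_apply_apply]
    rw [real_inner_self_eq_norm_sq]
  simp only [this]
  simp

/-- IBP with g = L for C² functions with poly growth gradient -/
lemma ibp_L {L : Ee → ℝ} (hL : ContDiff ℝ 2 L)
    (hLgrowth : PolyGrowth L) (hLgrad : PolyGrowth (fun x => gradient L x)) (h : Ee) :
    ∫ x, (⟪x, h⟫ : ℝ) * L x ∂(stdGaussian n)
      = ∫ x, (⟪gradient L x, h⟫ : ℝ) ∂(stdGaussian n) := by
  have hpgf : PolyGrowth (fun x => fderiv ℝ L x) := by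
    obtain ⟨C, hC, k, hk⟩ := hLgrad
    exact ⟨C, hC, k, fun x => by rw [← norm_gradient]; exact hk x⟩
  rw [gauss_ibp (n := n) L (hL.of_le (by norm_num)) hLgrowth hpgf h]
  simp only [inner_gradient]

/-- IBP with g = ⟪∇f ·, h⟫ -/
lemma ibp_grad {f : Ee → ℝ} (hf : ContDiff ℝ 2 f)
    (hfgrad : PolyGrowth (fun x => gradient f x))
    (hfhess : PolyGrowth (fun x => fderiv ℝ (gradient f) x)) (h : Ee) :
    ∫ x, (⟪x, h⟫ : ℝ) * ⟪gradient f x, h⟫ ∂(stdGaussian n)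
      = ∫ x, (⟪fderiv ℝ (gradient f) x h, h⟫ : ℝ) ∂(stdGaussian n) := by
  have hgrad_cd : ContDiff ℝ 1 (gradient f) := contdiff_gradient hf
  have hgrad_diff : Differentiable ℝ (gradient f) := hgrad_cd.differentiable (by norm_num)
  set g : Ee → ℝ := fun x => (⟪gradient f x, h⟫ : ℝ) with hg
  have heq : g = (⇑(innerSL ℝ h)) ∘ gradient f := by
    funext x; simp only [Function.comp_apply, innerSL_apply_apply]; exact real_inner_comm h _
  have hfd : ∀ x : Ee, fderiv ℝ g x = (innerSL ℝ h).comp (fderiv ℝ (gradient f) x) := by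
    intro x
    rw [heq, fderiv_comp x (innerSL ℝ h).differentiableAt (hgrad_diff x),
      ContinuousLinearMap.fderiv]
  obtain ⟨C, hC, k, hk⟩ := hfhess
  have := gauss_ibp (n := n) g
    (ContDiff.inner ℝ hgrad_cd contDiff_const)
    (pg_inner_grad hfgrad h)
    ⟨C * (1 + ‖h‖), by positivity, k, fun x => by
      beta_reduce
      rw [hfd x]
      calc ‖(innerSL ℝ h).comp (fderiv ℝ (gradient f) x)‖
          ≤ ‖innerSL ℝ h‖ * ‖fderiv ℝ (gradient f) x‖ := ContinuousLinearMap.opNorm_comp_le _ _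
        _ ≤ ‖h‖ * (C * (1 + ‖x‖)^k) := by
            rw [innerSL_apply_norm]
            exact mul_le_mul_of_nonneg_left (hk x) (norm_nonneg h)
        _ ≤ C * (1 + ‖h‖) * (1 + ‖x‖)^k := by
            have : (0:ℝ) ≤ C * (1 + ‖x‖)^k := by positivity
            nlinarith [norm_nonneg h]⟩ h
  rw [this]
  have hpt : ∀ x : Ee, fderiv ℝ g x h = (⟪fderiv ℝ (gradient f) x h, h⟫ : ℝ) := by
    intro x
    rw [hfd x]
    simp only [ContinuousLinearMap.coe_comp', Function.comp_apply, innerSL_apply_apply]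
    exact real_inner_comm _ _
  simp only [hpt]

/-- IBP with g = ⟪·,h⟫·L -/
lemma ibp_quad_L {L : Ee → ℝ} (hL : ContDiff ℝ 2 L)
    (hLgrowth : PolyGrowth L) (hLgrad : PolyGrowth (fun x => gradient L x)) (h : Ee) :
    ∫ x, ((⟪x, h⟫ : ℝ) * ⟪x, h⟫) * L x ∂(stdGaussian n)
      = ‖h‖^2 * (∫ y, L y ∂(stdGaussian n))
        + ∫ x, (⟪x, h⟫ : ℝ) * ⟪gradient L x, h⟫ ∂(stdGaussian n) := by
  have hLd : Differentiable ℝ L := (hL.of_le (by norm_num : (1:WithTop ℕ∞) ≤ 2)).differentiable (by norm_num)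
  have hL1 : ContDiff ℝ 1 L := hL.of_le (by norm_num)
  have hinner_cd : ContDiff ℝ 1 (fun x : Ee => (⟪x, h⟫ : ℝ)) :=
    ContDiff.inner ℝ contDiff_id contDiff_const
  have hinner_eq : (fun x : Ee => (⟪x, h⟫ : ℝ)) = ⇑(innerSL ℝ h) := by
    funext x; simp only [innerSL_apply_apply]; exact real_inner_comm h x
  have hinner_fd : ∀ x : Ee, fderiv ℝ (fun x : Ee => (⟪x, h⟫ : ℝ)) x = innerSL ℝ h := by
    intro x; rw [hinner_eq]; exact ContinuousLinearMap.fderiv _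
  set g : Ee → ℝ := fun x => (⟪x, h⟫ : ℝ) * L x with hg
  have hfd : ∀ x : Ee, fderiv ℝ g x
      = (⟪x, h⟫ : ℝ) • fderiv ℝ L x + L x • innerSL ℝ h := by
    intro x
    rw [hg, fderiv_fun_mul (by
        have := hinner_cd.differentiable (by norm_num) x
        exact this) (hLd x), hinner_fd x]
  obtain ⟨C, hC, k, hk⟩ := hLgrowth
  obtain ⟨D, hD, l, hl⟩ := hLgrad
  have hfdpg : PolyGrowth (fun x => fderiv ℝ g x) := by
    refine ⟨(1 + ‖h‖) * (C + D), by positivity, k + l + 1, fun x => ?_⟩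
    beta_reduce
    rw [hfd x]
    have h1 : ‖(⟪x, h⟫ : ℝ) • fderiv ℝ L x‖ ≤ ((1 + ‖h‖) * (1 + ‖x‖)) * (D * (1 + ‖x‖)^l) := by
      rw [norm_smul, Real.norm_eq_abs]
      apply mul_le_mul _ _ (norm_nonneg _) (by positivity)
      · calc |(⟪x, h⟫ : ℝ)| ≤ ‖x‖ * ‖h‖ := abs_real_inner_le_norm x h
          _ ≤ (1 + ‖h‖) * (1 + ‖x‖) := by nlinarith [norm_nonneg x, norm_nonneg h]
      · rw [← norm_gradient]; exact hl x
    have h2 : ‖L x • innerSL ℝ h‖ ≤ (C * (1 + ‖x‖)^k) * ‖h‖ := by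
      have e0 : ‖L x • innerSL ℝ h‖ ≤ ‖L x‖ * ‖innerSL ℝ h‖ :=
        ContinuousLinearMap.opNorm_smul_le _ _
      refine e0.trans ?_
      rw [innerSL_apply_norm]
      exact mul_le_mul_of_nonneg_right (hk x) (norm_nonneg h)
    have hx1 : (1:ℝ) ≤ 1 + ‖x‖ := by linarith [norm_nonneg x]
    have e1 : ((1 + ‖h‖) * (1 + ‖x‖)) * (D * (1 + ‖x‖)^l)
        ≤ (1 + ‖h‖) * D * (1 + ‖x‖)^(k+l+1) := by
      have : (1 + ‖x‖) * (1 + ‖x‖)^l ≤ (1 + ‖x‖)^(k+l+1) := by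
        rw [← pow_succ']
        exact pow_le_pow_right₀ hx1 (by omega)
      calc ((1 + ‖h‖) * (1 + ‖x‖)) * (D * (1 + ‖x‖)^l)
          = (1 + ‖h‖) * D * ((1 + ‖x‖) * (1 + ‖x‖)^l) := by ring
        _ ≤ (1 + ‖h‖) * D * (1 + ‖x‖)^(k+l+1) := by
            apply mul_le_mul_of_nonneg_left this (by positivity)
    have e2 : (C * (1 + ‖x‖)^k) * ‖h‖ ≤ (1 + ‖h‖) * C * (1 + ‖x‖)^(k+l+1) := by
      have hp : (1 + ‖x‖)^k ≤ (1 + ‖x‖)^(k+l+1) := pow_le_pow_right₀ hx1 (by omega)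
      calc (C * (1 + ‖x‖)^k) * ‖h‖ ≤ (C * (1 + ‖x‖)^(k+l+1)) * (1 + ‖h‖) := by
            apply mul_le_mul _ _ (norm_nonneg h) (by positivity)
            · exact mul_le_mul_of_nonneg_left hp hC.le
            · linarith [norm_nonneg h]
        _ = (1 + ‖h‖) * C * (1 + ‖x‖)^(k+l+1) := by ring
    calc ‖(⟪x, h⟫ : ℝ) • fderiv ℝ L x + L x • innerSL ℝ h‖
        ≤ ‖(⟪x, h⟫ : ℝ) • fderiv ℝ L x‖ + ‖L x • innerSL ℝ h‖ := norm_add_le _ _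
      _ ≤ (1 + ‖h‖) * D * (1 + ‖x‖)^(k+l+1) + (1 + ‖h‖) * C * (1 + ‖x‖)^(k+l+1) := by
          apply add_le_add (h1.trans e1) (h2.trans e2)
      _ = (1 + ‖h‖) * (C + D) * (1 + ‖x‖)^(k+l+1) := by ring
  have hibp := gauss_ibp (n := n) g (hinner_cd.mul hL1)
    (pg_mul (pg_inner h) ⟨C, hC, k, hk⟩) hfdpg h
  have hpt : ∀ x : Ee, fderiv ℝ g x h
      = (⟪x, h⟫ : ℝ) * ⟪gradient L x, h⟫ + ‖h‖^2 * L x := by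
    intro x
    rw [hfd x]
    simp only [ContinuousLinearMap.add_apply, ContinuousLinearMap.coe_smul',
      Pi.smul_apply, smul_eq_mul, innerSL_apply_apply]
    rw [inner_gradient, real_inner_self_eq_norm_sq]
    ring
  have hmul : ∀ x : Ee, (⟪x, h⟫ : ℝ) * g x = ((⟪x, h⟫ : ℝ) * ⟪x, h⟫) * L x := by
    intro x; rw [hg]; ring
  simp only [hmul] at hibp
  simp only [hpt] at hibp
  rw [hibp]
  have hi1 : Integrable (fun x : Ee => (⟪x, h⟫ : ℝ) * ⟪gradient L x, h⟫) (stdGaussian n) := by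
    apply integrable_cpg
    · exact (cont_inner h).mul (Continuous.inner (contdiff_gradient hL).continuous
        continuous_const)
    · exact pg_mul (pg_inner h) (pg_inner_grad ⟨D, hD, l, hl⟩ h)
  have hi2 : Integrable (fun x : Ee => ‖h‖^2 * L x) (stdGaussian n) :=
    (integrable_cpg hL1.continuous ⟨C, hC, k, hk⟩).const_mul _
  rw [integral_add hi1 hi2, integral_const_mul]
  ring

end StdGaussAux

namespace StdGaussAux

variable {n : ℕ}

lemma integral_pos_of_pos {u : EuclideanSpace ℝ (Fin n) → ℝ}
    (hpos : ∀ x, 0 < u x) (hi : Integrable u (stdGaussian n)) :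
    0 < ∫ x, u x ∂(stdGaussian n) := by
  rw [integral_pos_iff_support_of_nonneg_ae
    (Filter.Eventually.of_forall fun x => (hpos x).le) hi]
  have : Function.support u = Set.univ := by
    ext x; simp [Function.support, (hpos x).ne']
  rw [this]
  simp

lemma map_test {φ L : EuclideanSpace ℝ (Fin n) → ℝ} (hφ : ContDiff ℝ 2 φ)
    (hLc : Continuous L) (hLE : 0 ≤ ∫ y, L y ∂(stdGaussian n))
    (hLnn : ∀ x, 0 ≤ L x)
    (hT : (stdGaussian n).map (fun x => x + gradient φ x)
        = (stdGaussian n).withDensity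
            (fun x => ENNReal.ofReal (L x / ∫ y, L y ∂(stdGaussian n))))
    (f : EuclideanSpace ℝ (Fin n) → ℝ) (hf : Continuous f) :
    ∫ x, f (x + gradient φ x) ∂(stdGaussian n)
      = ∫ x, (L x / ∫ y, L y ∂(stdGaussian n)) * f x ∂(stdGaussian n) := by
  have hTc : Continuous (fun x : EuclideanSpace ℝ (Fin n) => x + gradient φ x) :=
    continuous_id.add (contdiff_gradient hφ).continuous
  rw [← integral_map hTc.measurable.aemeasurable hf.aestronglyMeasurable, hT]
  set E₀ := ∫ y, L y ∂(stdGaussian n) with hE₀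
  rw [show (fun x => ENNReal.ofReal (L x / E₀))
      = (fun x => ((L x / E₀).toNNReal : ℝ≥0∞)) from rfl,
    integral_withDensity_eq_integral_smul
      ((hLc.div_const E₀).measurable.real_toNNReal) f]
  congr 1 with x
  simp [NNReal.smul_def, Real.coe_toNNReal _ (div_nonneg (hLnn x) hLE)]

lemma sq_integral_le {u : EuclideanSpace ℝ (Fin n) → ℝ}
    (hu : Integrable u (stdGaussian n))
    (hu2 : Integrable (fun x => u x * u x) (stdGaussian n)) :
    (∫ x, u x ∂(stdGaussian n)) * (∫ x, u x ∂(stdGaussian n))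
      ≤ ∫ x, u x * u x ∂(stdGaussian n) := by
  set m := ∫ x, u x ∂(stdGaussian n) with hm
  have h0 : 0 ≤ ∫ x, (u x - m) * (u x - m) ∂(stdGaussian n) :=
    integral_nonneg (fun x => mul_self_nonneg _)
  have heq : (fun x => (u x - m) * (u x - m))
      = fun x => (u x * u x - (2 * m) * u x) + m * m := by
    funext x; ring
  have ia : Integrable (fun x => u x * u x - (2 * m) * u x) (stdGaussian n) :=
    hu2.sub (hu.const_mul (2 * m))
  rw [heq, integral_add ia (integrable_const _),
    integral_sub hu2 (hu.const_mul (2 * m)), integral_const_mul, integral_const] at h0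
  simp only [Measure.real, measure_univ, ENNReal.toReal_one, one_smul, smul_eq_mul] at h0
  linarith

end StdGaussAux

open StdGaussAux

theorem stmt_1 (n : ℕ) (L : EuclideanSpace ℝ (Fin n) → ℝ)
    (hL : ContDiff ℝ 2 L) (hLpos : ∀ x, 0 < L x)
    (hLgrowth : PolyGrowth L)
    (hLgrad : PolyGrowth (fun x => gradient L x))
    (hLhess : PolyGrowth (fun x => fderiv ℝ (gradient L) x))
    (φ : EuclideanSpace ℝ (Fin n) → ℝ)
    (hφ : ContDiff ℝ 2 φ)
    (hgrad : PolyGrowth (fun x => gradient φ x))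
    (hhess : PolyGrowth (fun x => fderiv ℝ (gradient φ) x))
    (hT : (stdGaussian n).map (fun x => x + gradient φ x)
        = (stdGaussian n).withDensity
            (fun x => ENNReal.ofReal (L x / ∫ y, L y ∂(stdGaussian n)))) :
    ∀ h : EuclideanSpace ℝ (Fin n),
      (1 / (2 * ∫ y, L y ∂(stdGaussian n))) *
          ((∫ x, ⟪fderiv ℝ (gradient L) x h, h⟫ ∂(stdGaussian n))
            - (1 / ∫ y, L y ∂(stdGaussian n)) *
                (∫ x, ⟪gradient L x, h⟫ ∂(stdGaussian n)) ^ 2)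
        ≥ ∫ x, ⟪fderiv ℝ (gradient φ) x h, h⟫ ∂(stdGaussian n) := by
  intro h
  have hLc : Continuous L := hL.continuous
  have hLi : Integrable L (stdGaussian n) := integrable_cpg hLc hLgrowth
  have hE : 0 < ∫ y, L y ∂(stdGaussian n) := integral_pos_of_pos hLpos hLi
  set E₀ := ∫ y, L y ∂(stdGaussian n) with hE₀
  set A := ∫ x, (⟪fderiv ℝ (gradient L) x h, h⟫ : ℝ) ∂(stdGaussian n) with hA
  set B := ∫ x, (⟪gradient L x, h⟫ : ℝ) ∂(stdGaussian n) with hB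
  set P := ∫ x, (⟪fderiv ℝ (gradient φ) x h, h⟫ : ℝ) ∂(stdGaussian n) with hP
  set Q := ∫ x, (⟪gradient φ x, h⟫ : ℝ) ∂(stdGaussian n) with hQ
  set V := ∫ x, (⟪gradient φ x, h⟫ : ℝ) * ⟪gradient φ x, h⟫ ∂(stdGaussian n) with hV
  -- continuity facts
  have hgφc : Continuous (fun x => gradient φ x) := (contdiff_gradient hφ).continuous
  have hgLc : Continuous (fun x => gradient L x) := (contdiff_gradient hL).continuous
  have hinc := cont_inner (n := n) h
  -- integrability facts
  have i1 : Integrable (fun x : EuclideanSpace ℝ (Fin n) => (⟪x, h⟫ : ℝ)) (stdGaussian n) :=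
    integrable_cpg hinc (pg_inner h)
  have igφ : Integrable (fun x => (⟪gradient φ x, h⟫ : ℝ)) (stdGaussian n) :=
    integrable_cpg (Continuous.inner hgφc continuous_const) (pg_inner_grad hgrad h)
  have i2 : Integrable (fun x : EuclideanSpace ℝ (Fin n) =>
      (⟪x, h⟫ : ℝ) * ⟪x, h⟫) (stdGaussian n) :=
    integrable_cpg (hinc.mul hinc) (pg_mul (pg_inner h) (pg_inner h))
  have icross : Integrable (fun x => (⟪x, h⟫ : ℝ) * ⟪gradient φ x, h⟫) (stdGaussian n) :=
    integrable_cpg (hinc.mul (Continuous.inner hgφc continuous_const))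
      (pg_mul (pg_inner h) (pg_inner_grad hgrad h))
  have isq : Integrable (fun x => (⟪gradient φ x, h⟫ : ℝ) * ⟪gradient φ x, h⟫)
      (stdGaussian n) :=
    integrable_cpg ((Continuous.inner hgφc continuous_const).mul
      (Continuous.inner hgφc continuous_const))
      (pg_mul (pg_inner_grad hgrad h) (pg_inner_grad hgrad h))
  -- first moment identity : Q = B / E₀
  have t1 := map_test hφ hLc hE.le (fun x => (hLpos x).le) hT
    (fun y => (⟪y, h⟫ : ℝ)) hinc
  have t1l : ∫ x, (⟪x + gradient φ x, h⟫ : ℝ) ∂(stdGaussian n) = Q := by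
    have : (fun x => (⟪x + gradient φ x, h⟫ : ℝ))
        = fun x => (⟪x, h⟫ : ℝ) + ⟪gradient φ x, h⟫ := by
      funext x; rw [inner_add_left]
    rw [this, integral_add i1 igφ, ibp_one h, zero_add]
  have t1r : ∫ x, (L x / E₀) * (⟪x, h⟫ : ℝ) ∂(stdGaussian n) = E₀⁻¹ * B := by
    have : (fun x => (L x / E₀) * (⟪x, h⟫ : ℝ))
        = fun x => E₀⁻¹ * ((⟪x, h⟫ : ℝ) * L x) := by
      funext x; field_simp
    rw [this, integral_const_mul, ibp_L hL hLgrowth hLgrad h]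
  have f1 : Q = E₀⁻¹ * B := by rw [← t1l, ← t1r]; exact t1
  -- second moment identity : ‖h‖² + 2 P + V = ‖h‖² + E₀⁻¹ * A
  have t2 := map_test hφ hLc hE.le (fun x => (hLpos x).le) hT
    (fun y => (⟪y, h⟫ : ℝ) * ⟪y, h⟫) (hinc.mul hinc)
  have t2l : ∫ x, (⟪x + gradient φ x, h⟫ : ℝ) * ⟪x + gradient φ x, h⟫ ∂(stdGaussian n)
      = ‖h‖^2 + (2 * P + V) := by
    have : (fun x => (⟪x + gradient φ x, h⟫ : ℝ) * ⟪x + gradient φ x, h⟫)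
        = fun x => (⟪x, h⟫ : ℝ) * ⟪x, h⟫
            + (2 * ((⟪x, h⟫ : ℝ) * ⟪gradient φ x, h⟫)
              + (⟪gradient φ x, h⟫ : ℝ) * ⟪gradient φ x, h⟫) := by
      funext x; rw [inner_add_left]; ring
    have iB : Integrable (fun x => 2 * ((⟪x, h⟫ : ℝ) * ⟪gradient φ x, h⟫)) (stdGaussian n) :=
      icross.const_mul 2
    have iA : Integrable (fun x => 2 * ((⟪x, h⟫ : ℝ) * ⟪gradient φ x, h⟫)
        + (⟪gradient φ x, h⟫ : ℝ) * ⟪gradient φ x, h⟫) (stdGaussian n) := iB.add isq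
    rw [this, integral_add i2 iA, integral_add iB isq, integral_const_mul, ibp_linear h,
      ibp_grad hφ hgrad hhess h]
  have t2r : ∫ x, (L x / E₀) * ((⟪x, h⟫ : ℝ) * ⟪x, h⟫) ∂(stdGaussian n)
      = ‖h‖^2 + E₀⁻¹ * A := by
    have : (fun x => (L x / E₀) * ((⟪x, h⟫ : ℝ) * ⟪x, h⟫))
        = fun x => E₀⁻¹ * (((⟪x, h⟫ : ℝ) * ⟪x, h⟫) * L x) := by
      funext x; field_simp
    rw [this, integral_const_mul, ibp_quad_L hL hLgrowth hLgrad h, ← hE₀,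
      ibp_grad hL hLgrad hLhess h, ← hA]
    field_simp
    try ring
  have f2 : 2 * P + V = E₀⁻¹ * A := by
    have := t2.trans t2r
    rw [t2l] at this
    linarith
  -- Cauchy–Schwarz
  have f3 : Q * Q ≤ V := sq_integral_le igφ isq
  -- conclude
  rw [ge_iff_le]
  have hE' : E₀ ≠ 0 := hE.ne'
  have key : 1 / (2 * E₀) * (A - 1 / E₀ * B ^ 2) = E₀⁻¹ * A / 2 - Q * Q / 2 := by
    rw [f1]; field_simp
  rw [key]
  linarith
end

section
/- Let γ be the standard Gaussian measure on ℝⁿ and let L : ℝⁿ → ℝ be a C² function with L > 0 such that L, ∇L and Hess L have at most polynomial growth; set E[L] = ∫ L dγ. Then for every h ∈ ℝⁿ, ‖h‖² + (1/E[L]) · ∫ ⟨Hess L(x) h, h⟩ dγ(x) ≥ (1/E[L]²) · ( ∫ ⟨∇L(x), h⟩ dγ(x) )². (This is the paper's Proposition 1: I + E[∇²L]/E[L] ≥ E[∇L]⊗E[∇L]/E[L]² as quadratic forms, in the finite-dimensional Gaussian setting; unlike Theorem 1 it requires no transport map.) -/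
open MeasureTheory Real
open scoped RealInnerProductSpace ENNReal

namespace SG

variable {n : ℕ}

/-- the Gaussian density -/
noncomputable def gd (n : ℕ) (x : EuclideanSpace ℝ (Fin n)) : ℝ :=
  (2 * π) ^ (-(n : ℝ) / 2) * Real.exp (-‖x‖ ^ 2 / 2)

lemma gd_pos (x : EuclideanSpace ℝ (Fin n)) : 0 < gd n x := by
  exact mul_pos (Real.rpow_pos_of_pos (by positivity) _) (Real.exp_pos _)

lemma gd_continuous : Continuous (gd n) := by
  apply continuous_const.mul
  exact Real.continuous_exp.comp ((continuous_norm.pow 2).neg.div_const 2)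

lemma stdGaussian_eq :
    stdGaussian n = (volume : Measure (EuclideanSpace ℝ (Fin n))).withDensity
      (fun x => ((gd n x).toNNReal : ℝ≥0∞)) := rfl

lemma gd_meas : Measurable (fun x : EuclideanSpace ℝ (Fin n) => (gd n x).toNNReal) :=
  (gd_continuous.measurable).real_toNNReal

lemma integral_eq (g : EuclideanSpace ℝ (Fin n) → ℝ) :
    ∫ x, g x ∂(stdGaussian n) = ∫ x, gd n x * g x := by
  rw [stdGaussian_eq, integral_withDensity_eq_integral_smul gd_meas]
  refine integral_congr_ae (Filter.Eventually.of_forall fun x => ?_)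
  simp [NNReal.smul_def, Real.coe_toNNReal _ (gd_pos x).le]

lemma integrable_iff {g : EuclideanSpace ℝ (Fin n) → ℝ} :
    Integrable g (stdGaussian n) ↔ Integrable (fun x => gd n x * g x) volume := by
  rw [stdGaussian_eq, integrable_withDensity_iff_integrable_smul gd_meas]
  refine integrable_congr (Filter.Eventually.of_forall fun x => ?_)
  simp [NNReal.smul_def, Real.coe_toNNReal _ (gd_pos x).le]

lemma integrable_exp_neg_quarter :
    Integrable (fun x : EuclideanSpace ℝ (Fin n) => Real.exp (-(1/4) * ‖x‖^2)) volume := by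
  have h := (GaussianFourier.integrable_cexp_neg_mul_sq_norm_add (V := EuclideanSpace ℝ (Fin n))
    (b := (1/4 : ℂ)) (by norm_num) 0 0).norm
  refine h.congr (Filter.Eventually.of_forall fun x => ?_)
  simp [Complex.norm_exp]
  norm_cast

/-- Workhorse: every a.e.-strongly-measurable function with exponential growth bound is
integrable against the standard Gaussian. -/
lemma integrable_of_exp_bound {g : EuclideanSpace ℝ (Fin n) → ℝ}
    (hg : AEStronglyMeasurable g volume) {C a : ℝ} (ha : 0 ≤ a)
    (hb : ∀ x, |g x| ≤ C * Real.exp (a * ‖x‖)) :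
    Integrable g (stdGaussian n) := by
  have hC : 0 ≤ C := le_trans (abs_nonneg _) (by simpa using hb 0)
  rw [integrable_iff]
  set p : ℝ := (2 * π) ^ (-(n : ℝ) / 2) with hp
  have hppos : 0 < p := Real.rpow_pos_of_pos (by positivity) _
  refine Integrable.mono' ((integrable_exp_neg_quarter.const_mul (p * C * Real.exp (a^2))))
    ((gd_continuous.aestronglyMeasurable).mul hg)
    (Filter.Eventually.of_forall fun x => ?_)
  have h1 : ‖gd n x * g x‖ = gd n x * |g x| := by
    rw [norm_mul, Real.norm_eq_abs, Real.norm_eq_abs, abs_of_pos (gd_pos x)]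
  rw [h1]
  have h2 : gd n x * |g x| ≤ gd n x * (C * Real.exp (a * ‖x‖)) :=
    mul_le_mul_of_nonneg_left (hb x) (gd_pos x).le
  refine h2.trans ?_
  have h3 : gd n x * (C * Real.exp (a * ‖x‖))
      = p * C * Real.exp (a * ‖x‖ + -‖x‖^2/2) := by
    rw [Real.exp_add]; unfold gd; ring
  rw [h3]
  have h4 : a * ‖x‖ + -‖x‖^2/2 ≤ a^2 + -(1/4) * ‖x‖^2 := by
    nlinarith [sq_nonneg (a - ‖x‖/2), sq_nonneg ‖x‖]
  calc p * C * Real.exp (a * ‖x‖ + -‖x‖^2/2)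
      ≤ p * C * Real.exp (a^2 + -(1/4) * ‖x‖^2) :=
        mul_le_mul_of_nonneg_left (Real.exp_le_exp.mpr h4) (by positivity)
    _ = p * C * Real.exp (a^2) * Real.exp (-(1/4) * ‖x‖^2) := by rw [Real.exp_add]; ring

lemma integrable_of_exp_bound' {g : EuclideanSpace ℝ (Fin n) → ℝ}
    (hg : Continuous g) {C a : ℝ} (ha : 0 ≤ a)
    (hb : ∀ x, |g x| ≤ C * Real.exp (a * ‖x‖)) :
    Integrable g (stdGaussian n) :=
  integrable_of_exp_bound hg.aestronglyMeasurable ha hb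

lemma gd_translate (x v : EuclideanSpace ℝ (Fin n)) :
    gd n (x - v) = gd n x * Real.exp (⟪x, v⟫ - ‖v‖^2/2) := by
  unfold gd
  rw [@norm_sub_sq_real, mul_assoc, ← Real.exp_add]
  congr 1
  ring

/-- Translation identity for the Gaussian measure (Cameron–Martin, finite dim). -/
lemma integral_translate (g : EuclideanSpace ℝ (Fin n) → ℝ) (v : EuclideanSpace ℝ (Fin n)) :
    ∫ x, g (x + v) ∂(stdGaussian n)
      = ∫ x, Real.exp (⟪x, v⟫ - ‖v‖^2/2) * g x ∂(stdGaussian n) := by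
  rw [integral_eq, integral_eq]
  have h1 : (∫ x, gd n x * g (x + v))
      = ∫ x, gd n ((x + v) - v) * g (x + v) := by simp
  rw [h1, integral_add_right_eq_self (fun y => gd n (y - v) * g y) v]
  refine integral_congr_ae (Filter.Eventually.of_forall fun x => ?_)
  simp only [gd_translate]
  ring

lemma poly_le_exp (k : ℕ) {r : ℝ} (hr : 0 ≤ r) : (1 + r)^k ≤ Real.exp (k * r) := by
  have h1 : 1 + r ≤ Real.exp r := by
    have := Real.add_one_le_exp r
    linarith
  calc (1 + r)^k ≤ (Real.exp r)^k := pow_le_pow_left₀ (by linarith) h1 k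
    _ = Real.exp (k * r) := by rw [← Real.exp_nat_mul]

lemma integrable_poly_exp (A : ℝ) (m : ℕ) (b : ℝ) (hA : 0 ≤ A) (hb : 0 ≤ b) :
    Integrable (fun x : EuclideanSpace ℝ (Fin n) =>
      A * (1 + ‖x‖)^m * Real.exp (b * ‖x‖)) (stdGaussian n) := by
  refine integrable_of_exp_bound' (by fun_prop) (a := m + b) (C := A) (by positivity)
    (fun x => ?_)
  have h0 : (0:ℝ) ≤ ‖x‖ := norm_nonneg x
  have h1 : 0 < Real.exp (b * ‖x‖) := Real.exp_pos _
  have h2 : A * (1 + ‖x‖)^m * Real.exp (b * ‖x‖)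
      ≤ A * Real.exp (m * ‖x‖) * Real.exp (b * ‖x‖) := by
    have h4 := poly_le_exp m h0
    have h5 : A * (1 + ‖x‖)^m ≤ A * Real.exp (m * ‖x‖) :=
      mul_le_mul_of_nonneg_left h4 hA
    exact mul_le_mul_of_nonneg_right h5 h1.le
  rw [abs_of_nonneg (by positivity)]
  refine h2.trans (le_of_eq ?_)
  rw [mul_assoc, ← Real.exp_add]
  ring_nf

lemma integrable_const_mul_exp (A a : ℝ) (hA : 0 ≤ A) (ha : 0 ≤ a) :
    Integrable (fun x : EuclideanSpace ℝ (Fin n) => A * Real.exp (a * ‖x‖)) (stdGaussian n) :=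
  integrable_of_exp_bound' (by fun_prop) ha (fun x => le_of_eq (abs_of_nonneg (by positivity)))

lemma growth_bound' {F : Type*} [NormedAddCommGroup F] {g : EuclideanSpace ℝ (Fin n) → F}
    {C : ℝ} {k : ℕ} (hb : ∀ x, ‖g x‖ ≤ C * (1 + ‖x‖)^k) (hC : 0 ≤ C)
    {v : EuclideanSpace ℝ (Fin n)} {R : ℝ} (hv : ‖v‖ ≤ R) (x : EuclideanSpace ℝ (Fin n)) :
    ‖g (x + v)‖ ≤ C * (1 + R)^k * Real.exp (k * ‖x‖) := by
  have h0 : (0:ℝ) ≤ R := le_trans (norm_nonneg v) hv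
  calc ‖g (x + v)‖ ≤ C * (1 + ‖x + v‖)^k := hb _
    _ ≤ C * ((1 + R) * (1 + ‖x‖))^k := by
        refine mul_le_mul_of_nonneg_left (pow_le_pow_left₀ (by positivity) ?_ k) hC
        have h1 := norm_add_le x v
        nlinarith [norm_nonneg x, norm_nonneg v]
    _ = C * (1 + R)^k * (1 + ‖x‖)^k := by rw [mul_pow]; ring
    _ ≤ C * (1 + R)^k * Real.exp (k * ‖x‖) :=
        mul_le_mul_of_nonneg_left (poly_le_exp k (norm_nonneg x)) (by positivity)

lemma abs_le_of_ball {t t₀ : ℝ} (ht : t ∈ Metric.ball t₀ 1) : |t| ≤ |t₀| + 1 := by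
  rw [Metric.mem_ball, Real.dist_eq] at ht
  have := abs_sub_abs_le_abs_sub t t₀
  linarith

section Calc

variable {L : EuclideanSpace ℝ (Fin n) → ℝ}

lemma inner_gradient (x w : EuclideanSpace ℝ (Fin n)) :
    ⟪gradient L x, w⟫ = fderiv ℝ L x w := by
  rw [← InnerProductSpace.toDual_apply_apply]
  unfold gradient
  rw [LinearIsometryEquiv.apply_symm_apply]

lemma contDiff_gradient (hL : ContDiff ℝ 2 L) : ContDiff ℝ 1 (gradient L) :=
  ((InnerProductSpace.toDual ℝ (EuclideanSpace ℝ (Fin n))).symm.contDiff).comp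
    (hL.fderiv_right (by norm_num))

lemma hasDerivAt_L_line (hL : ContDiff ℝ 2 L) (x h : EuclideanSpace ℝ (Fin n)) (t : ℝ) :
    HasDerivAt (fun t : ℝ => L (x + t • h)) (⟪gradient L (x + t • h), h⟫) t := by
  have hline : HasDerivAt (fun t : ℝ => x + t • h) h t := by
    simpa using ((hasDerivAt_id t).smul_const h).const_add x
  have hfd : HasFDerivAt L (fderiv ℝ L (x + t • h)) (x + t • h) :=
    (hL.differentiable (by norm_num) _).hasFDerivAt
  have h2 := hfd.comp_hasDerivAt t hline
  refine h2.congr_deriv ?_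
  exact (inner_gradient _ _).symm

lemma hasDerivAt_grad_line (hL : ContDiff ℝ 2 L) (x h : EuclideanSpace ℝ (Fin n)) (t : ℝ) :
    HasDerivAt (fun t : ℝ => ⟪gradient L (x + t • h), h⟫)
      (⟪fderiv ℝ (gradient L) (x + t • h) h, h⟫) t := by
  have hg := contDiff_gradient hL
  have hline : HasDerivAt (fun t : ℝ => x + t • h) h t := by
    simpa using ((hasDerivAt_id t).smul_const h).const_add x
  have h1 : HasDerivAt (fun t : ℝ => gradient L (x + t • h))
      (fderiv ℝ (gradient L) (x + t • h) h) t :=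
    ((hg.differentiable one_ne_zero _).hasFDerivAt).comp_hasDerivAt t hline
  simpa using h1.inner ℝ (hasDerivAt_const t h)

lemma hasDerivAt_exp_side (s c : ℝ) (t : ℝ) :
    HasDerivAt (fun t : ℝ => Real.exp (t * s - t^2 * c / 2))
      ((s - t * c) * Real.exp (t * s - t^2 * c / 2)) t := by
  have h1 : HasDerivAt (fun t : ℝ => t * s - t^2 * c / 2) (s - t * c) t := by
    have h2 := (hasDerivAt_id t).mul_const s
    have h3 := ((hasDerivAt_pow 2 t).mul_const c).div_const 2
    refine (h2.sub h3).congr_deriv ?_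
    norm_num
    ring
  simpa [mul_comm] using h1.exp

end Calc

section Deriv

variable {L : EuclideanSpace ℝ (Fin n) → ℝ}

lemma hasDerivAt_Phi_left (hL : ContDiff ℝ 2 L)
    (hLgrad : PolyGrowth (fun x => gradient L x))
    {C : ℝ} {k : ℕ} (hC : 0 < C) (hCk : ∀ x, ‖L x‖ ≤ C * (1 + ‖x‖)^k)
    (h : EuclideanSpace ℝ (Fin n)) (t₀ : ℝ) :
    HasDerivAt (fun t : ℝ => ∫ x, L (x + t • h) ∂(stdGaussian n))
      (∫ x, ⟪gradient L (x + t₀ • h), h⟫ ∂(stdGaussian n)) t₀ := by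
  obtain ⟨Cg, hCg, kg, hCkg⟩ := hLgrad
  set R : ℝ := (|t₀| + 1) * ‖h‖ with hR
  have hR0 : 0 ≤ R := by positivity
  have hsm : ∀ t : ℝ, |t| ≤ |t₀| + 1 → ‖t • h‖ ≤ R := by
    intro t ht
    rw [norm_smul, Real.norm_eq_abs]
    exact mul_le_mul_of_nonneg_right ht (norm_nonneg h)
  have hgc : Continuous (gradient L) := (contDiff_gradient hL).continuous
  refine (hasDerivAt_integral_of_dominated_loc_of_deriv_le (Metric.ball_mem_nhds t₀ one_pos)
    (F := fun t x => L (x + t • h))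
    (F' := fun t x => ⟪gradient L (x + t • h), h⟫)
    (bound := fun x => (Cg * (1 + R)^kg * ‖h‖) * Real.exp (kg * ‖x‖))
    ?_ ?_ ?_ ?_ ?_ ?_).2
  · refine Filter.Eventually.of_forall fun t => ?_
    exact (hL.continuous.comp (continuous_id.add continuous_const)).aestronglyMeasurable
  · refine integrable_of_exp_bound'
      (hL.continuous.comp (continuous_id.add continuous_const)) (a := (k:ℝ))
      (C := C * (1 + R)^k) (by positivity) (fun x => ?_)
    exact growth_bound' hCk hC.le (hsm t₀ (by linarith [abs_nonneg t₀])) x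
  · exact ((hgc.comp (continuous_id.add continuous_const)).inner
      continuous_const).aestronglyMeasurable
  · refine Filter.Eventually.of_forall fun x => fun t ht => ?_
    have h1 : ‖⟪gradient L (x + t • h), h⟫‖ ≤ ‖gradient L (x + t • h)‖ * ‖h‖ := by
      rw [Real.norm_eq_abs]
      exact abs_real_inner_le_norm _ _
    have h2 : ‖gradient L (x + t • h)‖ ≤ Cg * (1 + R)^kg * Real.exp (kg * ‖x‖) :=
      growth_bound' hCkg hCg.le (hsm t (abs_le_of_ball ht)) x
    calc ‖⟪gradient L (x + t • h), h⟫‖ ≤ ‖gradient L (x + t • h)‖ * ‖h‖ := h1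
      _ ≤ (Cg * (1 + R)^kg * Real.exp (kg * ‖x‖)) * ‖h‖ :=
          mul_le_mul_of_nonneg_right h2 (norm_nonneg h)
      _ = (Cg * (1 + R)^kg * ‖h‖) * Real.exp (kg * ‖x‖) := by ring
  · exact integrable_const_mul_exp _ _ (by positivity) (by positivity)
  · exact Filter.Eventually.of_forall fun x => fun t _ => hasDerivAt_L_line hL x h t

lemma hasDerivAt_Phi_right (hL : ContDiff ℝ 2 L)
    {C : ℝ} {k : ℕ} (hC : 0 < C) (hCk : ∀ x, ‖L x‖ ≤ C * (1 + ‖x‖)^k)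
    (h : EuclideanSpace ℝ (Fin n)) (t₀ : ℝ) :
    HasDerivAt
      (fun t : ℝ => ∫ x, Real.exp (t * ⟪x, h⟫ - t^2 * ‖h‖^2 / 2) * L x ∂(stdGaussian n))
      (∫ x, (⟪x, h⟫ - t₀ * ‖h‖^2) * Real.exp (t₀ * ⟪x, h⟫ - t₀^2 * ‖h‖^2 / 2) * L x
        ∂(stdGaussian n)) t₀ := by
  obtain ⟨T, hT⟩ : ∃ T : ℝ, T = |t₀| + 1 := ⟨_, rfl⟩
  have hT0 : (0:ℝ) < T := by rw [hT]; positivity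
  have hcont : ∀ t : ℝ, Continuous
      (fun x : EuclideanSpace ℝ (Fin n) => Real.exp (t * ⟪x, h⟫ - t^2 * ‖h‖^2 / 2) * L x) := by
    intro t
    exact (Real.continuous_exp.comp ((continuous_const.mul (continuous_id.inner
      continuous_const)).sub continuous_const)).mul hL.continuous
  -- pointwise exponential bound used repeatedly
  have hexp : ∀ (t : ℝ), |t| ≤ T → ∀ x : EuclideanSpace ℝ (Fin n),
      Real.exp (t * ⟪x, h⟫ - t^2 * ‖h‖^2 / 2) ≤ Real.exp ((T * ‖h‖) * ‖x‖) := by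
    intro t ht x
    apply Real.exp_le_exp.mpr
    have h1 : |⟪x, h⟫| ≤ ‖x‖ * ‖h‖ := abs_real_inner_le_norm x h
    have h2 : t * ⟪x, h⟫ ≤ |t| * |⟪x, h⟫| := by
      rw [← abs_mul]; exact le_abs_self _
    have h3 : |t| * |⟪x, h⟫| ≤ T * (‖x‖ * ‖h‖) :=
      mul_le_mul ht h1 (abs_nonneg _) hT0.le
    have h5 : (0:ℝ) ≤ t^2 * ‖h‖^2 := by positivity
    have h6 : t * ⟪x, h⟫ ≤ T * ‖h‖ * ‖x‖ := by
      calc t * ⟪x, h⟫ ≤ |t| * |⟪x, h⟫| := h2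
        _ ≤ T * (‖x‖ * ‖h‖) := h3
        _ = T * ‖h‖ * ‖x‖ := by ring
    linarith
  have hlin : ∀ (t : ℝ), |t| ≤ T → ∀ x : EuclideanSpace ℝ (Fin n),
      |⟪x, h⟫ - t * ‖h‖^2| ≤ (‖h‖ + T * ‖h‖^2) * (1 + ‖x‖) := by
    intro t ht x
    have h1 : |⟪x, h⟫| ≤ ‖x‖ * ‖h‖ := abs_real_inner_le_norm x h
    have h2 : |⟪x, h⟫ - t * ‖h‖^2| ≤ |⟪x, h⟫| + |t| * ‖h‖^2 := by
      refine (abs_sub _ _).trans ?_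
      rw [abs_mul, abs_of_nonneg (sq_nonneg ‖h‖)]
    have h3 : |t| * ‖h‖^2 ≤ T * ‖h‖^2 :=
      mul_le_mul_of_nonneg_right ht (sq_nonneg ‖h‖)
    nlinarith [mul_nonneg (mul_nonneg hT0.le (sq_nonneg ‖h‖)) (norm_nonneg x),
      norm_nonneg h, norm_nonneg x]
  refine (hasDerivAt_integral_of_dominated_loc_of_deriv_le (Metric.ball_mem_nhds t₀ one_pos)
    (F := fun t x => Real.exp (t * ⟪x, h⟫ - t^2 * ‖h‖^2 / 2) * L x)
    (F' := fun t x => (⟪x, h⟫ - t * ‖h‖^2) * Real.exp (t * ⟪x, h⟫ - t^2 * ‖h‖^2 / 2) * L x)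
    (bound := fun x => (C * (‖h‖ + T * ‖h‖^2)) * (1 + ‖x‖)^(k+1)
      * Real.exp ((T * ‖h‖) * ‖x‖)) ?_ ?_ ?_ ?_ ?_ ?_).2
  · exact Filter.Eventually.of_forall fun t => (hcont t).aestronglyMeasurable
  · refine Integrable.mono'
      (integrable_poly_exp C k (T * ‖h‖) hC.le (by positivity))
      (hcont t₀).aestronglyMeasurable (Filter.Eventually.of_forall fun x => ?_)
    have h1 : ‖Real.exp (t₀ * ⟪x, h⟫ - t₀^2 * ‖h‖^2 / 2) * L x‖
        = Real.exp (t₀ * ⟪x, h⟫ - t₀^2 * ‖h‖^2 / 2) * |L x| := by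
      rw [norm_mul, Real.norm_eq_abs, Real.norm_eq_abs, abs_of_pos (Real.exp_pos _)]
    rw [h1]
    calc Real.exp (t₀ * ⟪x, h⟫ - t₀^2 * ‖h‖^2 / 2) * |L x|
        ≤ Real.exp ((T * ‖h‖) * ‖x‖) * (C * (1 + ‖x‖)^k) :=
          mul_le_mul (hexp t₀ (by rw [hT]; linarith [abs_nonneg t₀]) x) (hCk x) (abs_nonneg _) (Real.exp_pos _).le
      _ = C * (1 + ‖x‖)^k * Real.exp ((T * ‖h‖) * ‖x‖) := by ring
  · refine Continuous.aestronglyMeasurable ?_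
    exact ((continuous_id.inner continuous_const).sub continuous_const).mul
      ((Real.continuous_exp.comp ((continuous_const.mul (continuous_id.inner
        continuous_const)).sub continuous_const))) |>.mul hL.continuous
  · refine Filter.Eventually.of_forall fun x => fun t ht => ?_
    have htT : |t| ≤ T := hT ▸ abs_le_of_ball ht
    have h1 : ‖(⟪x, h⟫ - t * ‖h‖^2) * Real.exp (t * ⟪x, h⟫ - t^2 * ‖h‖^2 / 2) * L x‖
        = |⟪x, h⟫ - t * ‖h‖^2| * Real.exp (t * ⟪x, h⟫ - t^2 * ‖h‖^2 / 2) * |L x| := by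
      rw [norm_mul, norm_mul, Real.norm_eq_abs, Real.norm_eq_abs, Real.norm_eq_abs,
        abs_of_pos (Real.exp_pos _)]
    rw [h1]
    have step1 : |⟪x, h⟫ - t * ‖h‖^2| * Real.exp (t * ⟪x, h⟫ - t^2 * ‖h‖^2 / 2)
        ≤ ((‖h‖ + T * ‖h‖^2) * (1 + ‖x‖)) * Real.exp ((T * ‖h‖) * ‖x‖) :=
      mul_le_mul (hlin t htT x) (hexp t htT x) (Real.exp_pos _).le (by positivity)
    calc |⟪x, h⟫ - t * ‖h‖^2| * Real.exp (t * ⟪x, h⟫ - t^2 * ‖h‖^2 / 2) * |L x|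
        ≤ (((‖h‖ + T * ‖h‖^2) * (1 + ‖x‖)) * Real.exp ((T * ‖h‖) * ‖x‖))
            * (C * (1 + ‖x‖)^k) :=
          mul_le_mul step1 (hCk x) (abs_nonneg _) (by positivity)
      _ = (C * (‖h‖ + T * ‖h‖^2)) * (1 + ‖x‖)^(k+1) * Real.exp ((T * ‖h‖) * ‖x‖) := by
          rw [pow_succ]; ring
  · exact integrable_poly_exp _ _ _ (by positivity) (by positivity)
  · exact Filter.Eventually.of_forall fun x => fun t _ =>
      (hasDerivAt_exp_side ⟪x, h⟫ (‖h‖^2) t).mul_const (L x)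

lemma hasDerivAt_Psi (hL : ContDiff ℝ 2 L)
    (hLgrad : PolyGrowth (fun x => gradient L x))
    (hLhess : PolyGrowth (fun x => fderiv ℝ (gradient L) x))
    (h : EuclideanSpace ℝ (Fin n)) (t₀ : ℝ) :
    HasDerivAt (fun t : ℝ => ∫ x, ⟪gradient L (x + t • h), h⟫ ∂(stdGaussian n))
      (∫ x, ⟪fderiv ℝ (gradient L) (x + t₀ • h) h, h⟫ ∂(stdGaussian n)) t₀ := by
  obtain ⟨Cg, hCg, kg, hCkg⟩ := hLgrad
  obtain ⟨Ch, hCh, kh, hCkh⟩ := hLhess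
  set R : ℝ := (|t₀| + 1) * ‖h‖ with hR
  have hR0 : 0 ≤ R := by positivity
  have hsm : ∀ t : ℝ, |t| ≤ |t₀| + 1 → ‖t • h‖ ≤ R := by
    intro t ht
    rw [norm_smul, Real.norm_eq_abs]
    exact mul_le_mul_of_nonneg_right ht (norm_nonneg h)
  have hgc : Continuous (gradient L) := (contDiff_gradient hL).continuous
  have hhc : Continuous (fun x => fderiv ℝ (gradient L) x) :=
    (contDiff_gradient hL).continuous_fderiv one_ne_zero
  refine (hasDerivAt_integral_of_dominated_loc_of_deriv_le (Metric.ball_mem_nhds t₀ one_pos)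
    (F := fun t x => ⟪gradient L (x + t • h), h⟫)
    (F' := fun t x => ⟪fderiv ℝ (gradient L) (x + t • h) h, h⟫)
    (bound := fun x => (Ch * (1 + R)^kh * ‖h‖^2) * Real.exp (kh * ‖x‖))
    ?_ ?_ ?_ ?_ ?_ ?_).2
  · refine Filter.Eventually.of_forall fun t => Continuous.aestronglyMeasurable ?_
    exact (hgc.comp (continuous_id.add continuous_const)).inner continuous_const
  · refine integrable_of_exp_bound'
      ((hgc.comp (continuous_id.add continuous_const)).inner continuous_const)
      (a := (kg:ℝ)) (C := Cg * (1 + R)^kg * ‖h‖) (by positivity) (fun x => ?_)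
    have h2 : ‖gradient L (x + t₀ • h)‖ ≤ Cg * (1 + R)^kg * Real.exp (kg * ‖x‖) :=
      growth_bound' hCkg hCg.le (hsm t₀ (by linarith [abs_nonneg t₀])) x
    calc |⟪gradient L (x + t₀ • h), h⟫| ≤ ‖gradient L (x + t₀ • h)‖ * ‖h‖ :=
          abs_real_inner_le_norm _ _
      _ ≤ (Cg * (1 + R)^kg * Real.exp (kg * ‖x‖)) * ‖h‖ :=
          mul_le_mul_of_nonneg_right h2 (norm_nonneg h)
      _ = Cg * (1 + R)^kg * ‖h‖ * Real.exp (kg * ‖x‖) := by ring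
  · refine Continuous.aestronglyMeasurable ?_
    exact ((hhc.comp (continuous_id.add continuous_const)).clm_apply
      continuous_const).inner continuous_const
  · refine Filter.Eventually.of_forall fun x => fun t ht => ?_
    have h2 : ‖fderiv ℝ (gradient L) (x + t • h)‖ ≤ Ch * (1 + R)^kh * Real.exp (kh * ‖x‖) :=
      growth_bound' hCkh hCh.le (hsm t (abs_le_of_ball ht)) x
    have h3 : ‖fderiv ℝ (gradient L) (x + t • h) h‖
        ≤ (Ch * (1 + R)^kh * Real.exp (kh * ‖x‖)) * ‖h‖ :=
      le_trans ((fderiv ℝ (gradient L) (x + t • h)).le_opNorm h)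
        (mul_le_mul_of_nonneg_right h2 (norm_nonneg h))
    calc ‖⟪fderiv ℝ (gradient L) (x + t • h) h, h⟫‖
        ≤ ‖fderiv ℝ (gradient L) (x + t • h) h‖ * ‖h‖ := by
          rw [Real.norm_eq_abs]; exact abs_real_inner_le_norm _ _
      _ ≤ ((Ch * (1 + R)^kh * Real.exp (kh * ‖x‖)) * ‖h‖) * ‖h‖ :=
          mul_le_mul_of_nonneg_right h3 (norm_nonneg h)
      _ = (Ch * (1 + R)^kh * ‖h‖^2) * Real.exp (kh * ‖x‖) := by ring
  · exact integrable_const_mul_exp _ _ (by positivity) (by positivity)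
  · exact Filter.Eventually.of_forall fun x => fun t _ => hasDerivAt_grad_line hL x h t

lemma hasDerivAt_Theta (hL : ContDiff ℝ 2 L)
    {C : ℝ} {k : ℕ} (hC : 0 < C) (hCk : ∀ x, ‖L x‖ ≤ C * (1 + ‖x‖)^k)
    (h : EuclideanSpace ℝ (Fin n)) (t₀ : ℝ) :
    HasDerivAt
      (fun t : ℝ => ∫ x, (⟪x, h⟫ - t * ‖h‖^2) * Real.exp (t * ⟪x, h⟫ - t^2 * ‖h‖^2 / 2) * L x
        ∂(stdGaussian n))
      (∫ x, ((⟪x, h⟫ - t₀ * ‖h‖^2)^2 - ‖h‖^2)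
          * Real.exp (t₀ * ⟪x, h⟫ - t₀^2 * ‖h‖^2 / 2) * L x ∂(stdGaussian n)) t₀ := by
  obtain ⟨T, hT⟩ : ∃ T : ℝ, T = |t₀| + 1 := ⟨_, rfl⟩
  have hT0 : (0:ℝ) < T := by rw [hT]; positivity
  have hcont : ∀ t : ℝ, Continuous
      (fun x : EuclideanSpace ℝ (Fin n) =>
        (⟪x, h⟫ - t * ‖h‖^2) * Real.exp (t * ⟪x, h⟫ - t^2 * ‖h‖^2 / 2) * L x) := by
    intro t
    exact (((continuous_id.inner continuous_const).sub continuous_const).mul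
      (Real.continuous_exp.comp ((continuous_const.mul (continuous_id.inner
        continuous_const)).sub continuous_const))).mul hL.continuous
  have hexp : ∀ (t : ℝ), |t| ≤ T → ∀ x : EuclideanSpace ℝ (Fin n),
      Real.exp (t * ⟪x, h⟫ - t^2 * ‖h‖^2 / 2) ≤ Real.exp ((T * ‖h‖) * ‖x‖) := by
    intro t ht x
    apply Real.exp_le_exp.mpr
    have h1 : |⟪x, h⟫| ≤ ‖x‖ * ‖h‖ := abs_real_inner_le_norm x h
    have h2 : t * ⟪x, h⟫ ≤ |t| * |⟪x, h⟫| := by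
      rw [← abs_mul]; exact le_abs_self _
    have h5 : (0:ℝ) ≤ t^2 * ‖h‖^2 := by positivity
    have h6 : t * ⟪x, h⟫ ≤ T * ‖h‖ * ‖x‖ := by
      calc t * ⟪x, h⟫ ≤ |t| * |⟪x, h⟫| := h2
        _ ≤ T * (‖x‖ * ‖h‖) := mul_le_mul ht h1 (abs_nonneg _) hT0.le
        _ = T * ‖h‖ * ‖x‖ := by ring
    linarith
  have hlin : ∀ (t : ℝ), |t| ≤ T → ∀ x : EuclideanSpace ℝ (Fin n),
      |⟪x, h⟫ - t * ‖h‖^2| ≤ (‖h‖ + T * ‖h‖^2) * (1 + ‖x‖) := by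
    intro t ht x
    have h1 : |⟪x, h⟫| ≤ ‖x‖ * ‖h‖ := abs_real_inner_le_norm x h
    have h2 : |⟪x, h⟫ - t * ‖h‖^2| ≤ |⟪x, h⟫| + |t| * ‖h‖^2 := by
      refine (abs_sub _ _).trans ?_
      rw [abs_mul, abs_of_nonneg (sq_nonneg ‖h‖)]
    have h3 : |t| * ‖h‖^2 ≤ T * ‖h‖^2 :=
      mul_le_mul_of_nonneg_right ht (sq_nonneg ‖h‖)
    nlinarith [mul_nonneg (mul_nonneg hT0.le (sq_nonneg ‖h‖)) (norm_nonneg x),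
      norm_nonneg h, norm_nonneg x]
  have hsq : ∀ (t : ℝ), |t| ≤ T → ∀ x : EuclideanSpace ℝ (Fin n),
      |(⟪x, h⟫ - t * ‖h‖^2)^2 - ‖h‖^2|
        ≤ ((‖h‖ + T * ‖h‖^2)^2 + ‖h‖^2) * (1 + ‖x‖)^2 := by
    intro t ht x
    have ha := hlin t ht x
    have hb : (⟪x, h⟫ - t * ‖h‖^2)^2 ≤ ((‖h‖ + T * ‖h‖^2) * (1 + ‖x‖))^2 := by
      rw [← sq_abs]
      exact pow_le_pow_left₀ (abs_nonneg _) ha 2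
    have hc : |(⟪x, h⟫ - t * ‖h‖^2)^2 - ‖h‖^2| ≤ (⟪x, h⟫ - t * ‖h‖^2)^2 + ‖h‖^2 := by
      refine (abs_sub _ _).trans ?_
      rw [abs_of_nonneg (sq_nonneg _), abs_of_nonneg (sq_nonneg _)]
    nlinarith [sq_nonneg ‖h‖, norm_nonneg x, sq_nonneg (‖h‖ * ‖x‖),
      mul_nonneg (sq_nonneg ‖h‖) (norm_nonneg x)]
  refine (hasDerivAt_integral_of_dominated_loc_of_deriv_le (Metric.ball_mem_nhds t₀ one_pos)
    (F := fun t x => (⟪x, h⟫ - t * ‖h‖^2) * Real.exp (t * ⟪x, h⟫ - t^2 * ‖h‖^2 / 2) * L x)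
    (F' := fun t x => ((⟪x, h⟫ - t * ‖h‖^2)^2 - ‖h‖^2)
      * Real.exp (t * ⟪x, h⟫ - t^2 * ‖h‖^2 / 2) * L x)
    (bound := fun x => (C * ((‖h‖ + T * ‖h‖^2)^2 + ‖h‖^2)) * (1 + ‖x‖)^(k+2)
      * Real.exp ((T * ‖h‖) * ‖x‖)) ?_ ?_ ?_ ?_ ?_ ?_).2
  · exact Filter.Eventually.of_forall fun t => (hcont t).aestronglyMeasurable
  · refine Integrable.mono'
      (integrable_poly_exp (C * (‖h‖ + T * ‖h‖^2)) (k+1) (T * ‖h‖) (by positivity)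
        (by positivity))
      (hcont t₀).aestronglyMeasurable (Filter.Eventually.of_forall fun x => ?_)
    have htT : |t₀| ≤ T := by rw [hT]; linarith [le_refl |t₀|]
    have h1 : ‖(⟪x, h⟫ - t₀ * ‖h‖^2) * Real.exp (t₀ * ⟪x, h⟫ - t₀^2 * ‖h‖^2 / 2) * L x‖
        = |⟪x, h⟫ - t₀ * ‖h‖^2| * Real.exp (t₀ * ⟪x, h⟫ - t₀^2 * ‖h‖^2 / 2) * |L x| := by
      rw [norm_mul, norm_mul, Real.norm_eq_abs, Real.norm_eq_abs, Real.norm_eq_abs,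
        abs_of_pos (Real.exp_pos _)]
    rw [h1]
    have step1 : |⟪x, h⟫ - t₀ * ‖h‖^2| * Real.exp (t₀ * ⟪x, h⟫ - t₀^2 * ‖h‖^2 / 2)
        ≤ ((‖h‖ + T * ‖h‖^2) * (1 + ‖x‖)) * Real.exp ((T * ‖h‖) * ‖x‖) :=
      mul_le_mul (hlin t₀ htT x) (hexp t₀ htT x) (Real.exp_pos _).le (by positivity)
    calc |⟪x, h⟫ - t₀ * ‖h‖^2| * Real.exp (t₀ * ⟪x, h⟫ - t₀^2 * ‖h‖^2 / 2) * |L x|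
        ≤ (((‖h‖ + T * ‖h‖^2) * (1 + ‖x‖)) * Real.exp ((T * ‖h‖) * ‖x‖))
            * (C * (1 + ‖x‖)^k) :=
          mul_le_mul step1 (hCk x) (abs_nonneg _) (by positivity)
      _ = (C * (‖h‖ + T * ‖h‖^2)) * (1 + ‖x‖)^(k+1) * Real.exp ((T * ‖h‖) * ‖x‖) := by
          rw [pow_succ]; ring
  · refine Continuous.aestronglyMeasurable ?_
    exact ((((continuous_id.inner continuous_const).sub continuous_const).pow 2).sub
      continuous_const).mul
      (Real.continuous_exp.comp ((continuous_const.mul (continuous_id.inner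
        continuous_const)).sub continuous_const)) |>.mul hL.continuous
  · refine Filter.Eventually.of_forall fun x => fun t ht => ?_
    have htT : |t| ≤ T := hT ▸ abs_le_of_ball ht
    have h1 : ‖((⟪x, h⟫ - t * ‖h‖^2)^2 - ‖h‖^2)
          * Real.exp (t * ⟪x, h⟫ - t^2 * ‖h‖^2 / 2) * L x‖
        = |(⟪x, h⟫ - t * ‖h‖^2)^2 - ‖h‖^2|
          * Real.exp (t * ⟪x, h⟫ - t^2 * ‖h‖^2 / 2) * |L x| := by
      rw [norm_mul, norm_mul, Real.norm_eq_abs, Real.norm_eq_abs, Real.norm_eq_abs,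
        abs_of_pos (Real.exp_pos _)]
    rw [h1]
    have step1 : |(⟪x, h⟫ - t * ‖h‖^2)^2 - ‖h‖^2|
          * Real.exp (t * ⟪x, h⟫ - t^2 * ‖h‖^2 / 2)
        ≤ (((‖h‖ + T * ‖h‖^2)^2 + ‖h‖^2) * (1 + ‖x‖)^2) * Real.exp ((T * ‖h‖) * ‖x‖) :=
      mul_le_mul (hsq t htT x) (hexp t htT x) (Real.exp_pos _).le (by positivity)
    calc |(⟪x, h⟫ - t * ‖h‖^2)^2 - ‖h‖^2| * Real.exp (t * ⟪x, h⟫ - t^2 * ‖h‖^2 / 2) * |L x|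
        ≤ ((((‖h‖ + T * ‖h‖^2)^2 + ‖h‖^2) * (1 + ‖x‖)^2) * Real.exp ((T * ‖h‖) * ‖x‖))
            * (C * (1 + ‖x‖)^k) :=
          mul_le_mul step1 (hCk x) (abs_nonneg _) (by positivity)
      _ = (C * ((‖h‖ + T * ‖h‖^2)^2 + ‖h‖^2)) * (1 + ‖x‖)^(k+2)
            * Real.exp ((T * ‖h‖) * ‖x‖) := by
          rw [show k + 2 = k + 1 + 1 from rfl, pow_succ, pow_succ]; ring
  · exact integrable_poly_exp _ _ _ (by positivity) (by positivity)
  · refine Filter.Eventually.of_forall fun x => fun t _ => ?_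
    have hf : HasDerivAt (fun t : ℝ => ⟪x, h⟫ - t * ‖h‖^2) (-‖h‖^2) t := by
      simpa using ((hasDerivAt_id t).mul_const (‖h‖^2)).const_sub ⟪x, h⟫
    have hg := hasDerivAt_exp_side ⟪x, h⟫ (‖h‖^2) t
    have := (hf.mul hg).mul_const (L x)
    refine this.congr_deriv ?_
    ring

lemma Phi_eq (L : EuclideanSpace ℝ (Fin n) → ℝ) (h : EuclideanSpace ℝ (Fin n)) (t : ℝ) :
    ∫ x, L (x + t • h) ∂(stdGaussian n)
      = ∫ x, Real.exp (t * ⟪x, h⟫ - t^2 * ‖h‖^2 / 2) * L x ∂(stdGaussian n) := by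
  rw [integral_translate L (t • h)]
  refine integral_congr_ae (Filter.Eventually.of_forall fun x => ?_)
  have he : ⟪x, t • h⟫ - ‖t • h‖^2/2 = t * ⟪x, h⟫ - t^2 * ‖h‖^2 / 2 := by
    rw [real_inner_smul_right, norm_smul, mul_pow, Real.norm_eq_abs, sq_abs]
  simp only [he]

lemma Psi_eq_Theta (hL : ContDiff ℝ 2 L) (hLgrowth : PolyGrowth L)
    (hLgrad : PolyGrowth (fun x => gradient L x))
    (h : EuclideanSpace ℝ (Fin n)) (t : ℝ) :
    ∫ x, ⟪gradient L (x + t • h), h⟫ ∂(stdGaussian n)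
      = ∫ x, (⟪x, h⟫ - t * ‖h‖^2) * Real.exp (t * ⟪x, h⟫ - t^2 * ‖h‖^2 / 2) * L x
          ∂(stdGaussian n) := by
  obtain ⟨C, hC, k, hCk⟩ := hLgrowth
  have h1 := hasDerivAt_Phi_left hL hLgrad hC hCk h t
  have h2 := hasDerivAt_Phi_right hL hC hCk h t
  have heq : (fun t : ℝ => ∫ x, L (x + t • h) ∂(stdGaussian n))
      = fun t : ℝ => ∫ x, Real.exp (t * ⟪x, h⟫ - t^2 * ‖h‖^2 / 2) * L x ∂(stdGaussian n) :=
    funext (Phi_eq L h)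
  rw [heq] at h1
  exact h1.unique h2

lemma key1 (hL : ContDiff ℝ 2 L) (hLgrowth : PolyGrowth L)
    (hLgrad : PolyGrowth (fun x => gradient L x)) (h : EuclideanSpace ℝ (Fin n)) :
    ∫ x, ⟪gradient L x, h⟫ ∂(stdGaussian n)
      = ∫ x, ⟪x, h⟫ * L x ∂(stdGaussian n) := by
  have := Psi_eq_Theta hL hLgrowth hLgrad h 0
  simpa using this

lemma key2 (hL : ContDiff ℝ 2 L) (hLgrowth : PolyGrowth L)
    (hLgrad : PolyGrowth (fun x => gradient L x))
    (hLhess : PolyGrowth (fun x => fderiv ℝ (gradient L) x))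
    (h : EuclideanSpace ℝ (Fin n)) :
    ∫ x, ⟪fderiv ℝ (gradient L) x h, h⟫ ∂(stdGaussian n)
      = ∫ x, (⟪x, h⟫^2 - ‖h‖^2) * L x ∂(stdGaussian n) := by
  obtain ⟨C, hC, k, hCk⟩ := hLgrowth
  have h4 := hasDerivAt_Psi hL hLgrad hLhess h 0
  have h5 := hasDerivAt_Theta hL hC hCk h 0
  have heq : (fun t : ℝ => ∫ x, ⟪gradient L (x + t • h), h⟫ ∂(stdGaussian n))
      = fun t : ℝ => ∫ x, (⟪x, h⟫ - t * ‖h‖^2)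
          * Real.exp (t * ⟪x, h⟫ - t^2 * ‖h‖^2 / 2) * L x ∂(stdGaussian n) :=
    funext (Psi_eq_Theta hL ⟨C, hC, k, hCk⟩ hLgrad h)
  rw [heq] at h4
  have h6 := h4.unique h5
  simpa using h6

lemma int_inner_pow_L (hL : ContDiff ℝ 2 L)
    {C : ℝ} {k : ℕ} (hC : 0 < C) (hCk : ∀ x, ‖L x‖ ≤ C * (1 + ‖x‖)^k)
    (h : EuclideanSpace ℝ (Fin n)) (j : ℕ) :
    Integrable (fun x => ⟪x, h⟫^j * L x) (stdGaussian n) := by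
  refine integrable_of_exp_bound'
    (((continuous_id.inner continuous_const).pow j).mul hL.continuous)
    (a := ((j + k : ℕ) : ℝ)) (C := C * (1 + ‖h‖)^j) (by positivity) (fun x => ?_)
  have h1 : |⟪x, h⟫^j * L x| = |⟪x, h⟫|^j * |L x| := by
    rw [abs_mul, abs_pow]
  rw [h1]
  have h2 : |⟪x, h⟫|^j ≤ ((1 + ‖h‖) * (1 + ‖x‖))^j := by
    refine pow_le_pow_left₀ (abs_nonneg _) ?_ j
    have := abs_real_inner_le_norm x h
    nlinarith [norm_nonneg x, norm_nonneg h]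
  calc |⟪x, h⟫|^j * |L x| ≤ ((1 + ‖h‖) * (1 + ‖x‖))^j * (C * (1 + ‖x‖)^k) :=
        mul_le_mul h2 (hCk x) (abs_nonneg _) (by positivity)
    _ = (C * (1 + ‖h‖)^j) * (1 + ‖x‖)^(j + k) := by rw [mul_pow, pow_add]; ring
    _ ≤ (C * (1 + ‖h‖)^j) * Real.exp ((j + k : ℕ) * ‖x‖) :=
        mul_le_mul_of_nonneg_left (poly_le_exp _ (norm_nonneg x)) (by positivity)

lemma int_L_pos (hL : ContDiff ℝ 2 L) (hLpos : ∀ x, 0 < L x)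
    (hint : Integrable L (stdGaussian n)) :
    0 < ∫ x, L x ∂(stdGaussian n) := by
  rw [integral_eq]
  have hint2 : Integrable (fun x => gd n x * L x) volume := integrable_iff.mp hint
  refine (integral_pos_iff_support_of_nonneg
    (fun x => (mul_pos (gd_pos x) (hLpos x)).le) hint2).mpr ?_
  have hs : Function.support (fun x : EuclideanSpace ℝ (Fin n) => gd n x * L x)
      = Set.univ :=
    Set.eq_univ_of_forall (fun x => (mul_pos (gd_pos x) (hLpos x)).ne')
  rw [hs]
  exact isOpen_univ.measure_pos _ Set.univ_nonempty

end Deriv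

end SG

theorem stmt_6 (n : ℕ) (L : EuclideanSpace ℝ (Fin n) → ℝ)
    (hL : ContDiff ℝ 2 L) (hLpos : ∀ x, 0 < L x)
    (hLgrowth : PolyGrowth L)
    (hLgrad : PolyGrowth (fun x => gradient L x))
    (hLhess : PolyGrowth (fun x => fderiv ℝ (gradient L) x)) :
    ∀ h : EuclideanSpace ℝ (Fin n),
      ‖h‖ ^ 2 + (1 / ∫ y, L y ∂(stdGaussian n)) *
          (∫ x, ⟪fderiv ℝ (gradient L) x h, h⟫ ∂(stdGaussian n))
        ≥ (1 / (∫ y, L y ∂(stdGaussian n)) ^ 2) *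
            (∫ x, ⟪gradient L x, h⟫ ∂(stdGaussian n)) ^ 2 := by
  intro h
  obtain ⟨C, hC, k, hCk⟩ := hLgrowth
  have hLg : PolyGrowth L := ⟨C, hC, k, hCk⟩
  have hint0 : Integrable L (stdGaussian n) := by
    simpa using SG.int_inner_pow_L hL hC hCk h 0
  have hint1 : Integrable (fun x => ⟪x, h⟫ * L x) (stdGaussian n) := by
    simpa using SG.int_inner_pow_L hL hC hCk h 1
  have hint2 : Integrable (fun x => ⟪x, h⟫^2 * L x) (stdGaussian n) :=
    SG.int_inner_pow_L hL hC hCk h 2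
  have hapos : 0 < ∫ y, L y ∂(stdGaussian n) := SG.int_L_pos hL hLpos hint0
  rw [SG.key1 hL hLg hLgrad h, SG.key2 hL hLg hLgrad hLhess h]
  set a : ℝ := ∫ y, L y ∂(stdGaussian n) with ha
  set b : ℝ := ∫ x, ⟪x, h⟫ * L x ∂(stdGaussian n) with hb
  set c2 : ℝ := ∫ x, ⟪x, h⟫^2 * L x ∂(stdGaussian n) with hc2
  have ha' : a ≠ 0 := hapos.ne'
  have hsplit : ∫ x, (⟪x, h⟫^2 - ‖h‖^2) * L x ∂(stdGaussian n) = c2 - ‖h‖^2 * a := by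
    have e0 : (fun x : EuclideanSpace ℝ (Fin n) => (⟪x, h⟫^2 - ‖h‖^2) * L x)
        = fun x => ⟪x, h⟫^2 * L x - ‖h‖^2 * L x := by
      funext x; ring
    rw [e0, integral_sub hint2 (hint0.const_mul (‖h‖^2)), integral_const_mul]
  rw [hsplit]
  have hquad : 0 ≤ ∫ x, (⟪x, h⟫ - b/a)^2 * L x ∂(stdGaussian n) :=
    integral_nonneg fun x => mul_nonneg (sq_nonneg _) (hLpos x).le
  have hexpand : ∫ x, (⟪x, h⟫ - b/a)^2 * L x ∂(stdGaussian n)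
      = c2 - 2*(b/a)*b + (b/a)^2 * a := by
    have e1 : (fun x : EuclideanSpace ℝ (Fin n) => (⟪x, h⟫ - b/a)^2 * L x)
        = fun x => (⟪x, h⟫^2 * L x - (2*(b/a)) * (⟪x, h⟫ * L x)) + (b/a)^2 * L x := by
      funext x; ring
    have i1 : Integrable
        (fun x : EuclideanSpace ℝ (Fin n) => ⟪x, h⟫^2 * L x - (2*(b/a)) * (⟪x, h⟫ * L x))
        (stdGaussian n) := hint2.sub (hint1.const_mul _)
    have i2 : Integrable (fun x : EuclideanSpace ℝ (Fin n) => (b/a)^2 * L x)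
        (stdGaussian n) := hint0.const_mul _
    rw [e1, integral_add i1 i2, integral_sub hint2 (hint1.const_mul _),
      integral_const_mul, integral_const_mul]
  have h8 : c2 - 2*(b/a)*b + (b/a)^2*a = c2 - b^2/a := by field_simp; ring
  rw [hexpand, h8] at hquad
  have h9 : b^2/a ≤ c2 := by linarith
  have hcs : b^2 ≤ a * c2 := by
    calc b^2 = (b^2/a) * a := by field_simp
      _ ≤ c2 * a := mul_le_mul_of_nonneg_right h9 hapos.le
      _ = a * c2 := mul_comm _ _
  rw [ge_iff_le, ← sub_nonneg]
  have e2 : ‖h‖^2 + 1/a * (c2 - ‖h‖^2 * a) - 1/a^2 * b^2 = (a * c2 - b^2) / a^2 := by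
    field_simp
    ring
  rw [e2]
  exact div_nonneg (by linarith) (sq_nonneg a)
end
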